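/- arXiv:2506.23831 — 7 statements merged into one kernel-verified Lean document; each statement's English description precedes it below -/
import Mathlib

section
/- Let f be holomorphic on the open unit disk 𝔻 and suppose that, for some n ≥ 1, the derivatives f(0) = f'(0) = ⋯ = f^{(n-1)}(0) = 0 and f^{(n)}(0) is a positive real number. Suppose further that f satisfies the Jack condition. Then f maps the interval [0,1) into the reals, with f(x) > 0 for all x ∈ (0,1), and the restriction of f to [0,1) (i.e. the function x ↦ Re f(x)) is strictly increasing and convex on [0,1). -/
open Complex Metric Set

/-!
Write `f = zⁿ g` with `g(0) = f⁽ⁿ⁾(0)/n! > 0`. Then `g` also satisfies the Jack condition, so by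
the maximum modulus principle `|g|` is nondecreasing along `[0,1)`.

If `h` satisfies the Jack condition and `0 < r < 1`, then `θ ↦ |h(r e^{iθ})|²` is maximal at
`θ = 0`; its first derivative vanishes there and its second derivative is `≤ 0`, i.e.
`Im (conj h(r) h'(r)) = 0` and `r |h'(r)|² ≤ Re (conj h(r) h'(r)) + r Re (conj h(r) h''(r))`.

For `h = g` the first condition says that the argument of `g` is constant along `[0,1)`, so
`g > 0` there. Hence `f(x) = xⁿ g(x)` is positive and strictly increasing, and `f(x)/x` is
nondecreasing, i.e. `x f'(x) ≥ f(x) > 0`. The second condition for `h = f` then gives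
`r f f'' ≥ f' (r f' - f) ≥ 0` (real parts along the axis), so `f` is convex.
-/

open Filter Function Topology ComplexConjugate
open scoped ComplexOrder Nat

theorem IsLocalMax.deriv_deriv_nonpos {ψ : ℝ → ℝ} {a : ℝ} (hmax : IsLocalMax ψ a)
    (hc : ContinuousAt ψ a) : deriv (deriv ψ) a ≤ 0 := by
  by_contra! hpos
  have hmin : IsLocalMin ψ a := isLocalMin_of_deriv_deriv_pos hpos hmax.deriv_eq_zero hc
  have hconst : ψ =ᶠ[𝓝 a] fun _ ↦ ψ a := (hmin.and hmax).mono fun _ h ↦ le_antisymm h.2 h.1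
  simp [hconst.deriv.deriv_eq] at hpos

theorem HasDerivAt.le_mul_of_monotoneOn_div {h : ℝ → ℝ} {h' r : ℝ} {s : Set ℝ}
    (hd : HasDerivAt h h' r) (hr : 0 < r) (hs : s ∈ 𝓝 r)
    (hmono : MonotoneOn (fun t ↦ h t / t) s) : h r ≤ r * h' := by
  have hk : HasDerivAt (fun t ↦ h t / t) ((h' * r - h r * 1) / r ^ 2) r :=
    hd.div (hasDerivAt_id' r) hr.ne'
  have h0 := hmono.derivWithin_nonneg (x := r)
  rw [derivWithin_of_mem_nhds hs, hk.deriv] at h0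
  have := mul_nonneg h0 (sq_nonneg r)
  rw [div_mul_cancel₀ _ (by positivity)] at this
  linarith

theorem constant_Ico_of_hasDerivAt_zero {E : Type*} [NormedAddCommGroup E] [NormedSpace ℝ E]
    {u : ℝ → E} {a b : ℝ} (hc : ContinuousOn u (Ico a b))
    (hd : ∀ x ∈ Ioo a b, HasDerivAt u 0 x) : ∀ x ∈ Ico a b, u x = u a := by
  rcases le_or_gt b a with hba | hab
  · simp [Ico_eq_empty_of_le hba]
  obtain ⟨c, hc'⟩ := isOpen_Ioo.exists_is_const_of_deriv_eq_zero isPreconnected_Ioo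
    (fun x hx ↦ (hd x hx).differentiableAt.differentiableWithinAt) (fun x hx ↦ (hd x hx).deriv)
  have h : EqOn u (fun _ ↦ c) (Ico a b) :=
    EqOn.of_subset_closure hc' hc continuousOn_const Ioo_subset_Ico_self
      (by rw [closure_Ioo hab.ne]; exact Ico_subset_Icc_self)
  intro x hx
  rw [h hx, h (left_mem_Ico.2 hab)]

theorem HasDerivAt.div_norm_of_im_conj_mul_eq_zero {w : ℝ → ℂ} {w' : ℂ} {x : ℝ}
    (hw : HasDerivAt w w' x) (hx : w x ≠ 0) (him : (conj (w x) * w').im = 0) :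
    HasDerivAt (fun t ↦ w t / ‖w t‖) 0 x := by
  have hN : HasDerivAt (fun t ↦ ‖w t‖) ((conj (w x) * w').re / ‖w x‖) x := by
    have := hw.norm_sq.sqrt (by positivity)
    simp only [Real.sqrt_sq (norm_nonneg _), Complex.inner] at this
    convert this using 1
    rw [mul_comm w']
    field_simp
  have hreal : conj (w x) * w' = ((conj (w x) * w').re : ℂ) := Complex.ext rfl (by simp [him])
  have hnorm : (‖w x‖ : ℂ) ≠ 0 := by exact_mod_cast norm_ne_zero_iff.2 hx
  refine (hw.div hN.ofReal_comp hnorm).congr_deriv ?_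
  rw [div_eq_zero_iff, sub_eq_zero]
  left
  push_cast
  rw [← hreal, ← mul_div_assoc, eq_div_iff hnorm, ← mul_assoc, mul_comm (w x), Complex.conj_mul']
  ring

theorem circleMap_apply_zero (c : ℂ) (R : ℝ) : circleMap c R 0 = c + R := by simp [circleMap]

theorem HasDerivAt.comp_circleMap {f : ℂ → ℂ} {f' c : ℂ} {R θ : ℝ}
    (hf : HasDerivAt f f' (circleMap c R θ)) :
    HasDerivAt (fun t ↦ f (circleMap c R t)) (f' * (circleMap 0 R θ * I)) θ :=
  hf.comp θ (hasDerivAt_circleMap c R θ)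

theorem AnalyticAt.iterate_dslope_apply_self {𝕜 : Type*} [NontriviallyNormedField 𝕜]
    [CompleteSpace 𝕜] [CharZero 𝕜] {f : 𝕜 → 𝕜} {z₀ : 𝕜} (hf : AnalyticAt 𝕜 f z₀) (k : ℕ) :
    (swap dslope z₀)^[k] f z₀ = iteratedDeriv k f z₀ / k ! := by
  rw [← (hf.hasFPowerSeriesAt.has_fpower_series_iterate_dslope_fslope k).coeff_zero 1,
    ← FormalMultilinearSeries.coeff, FormalMultilinearSeries.coeff_iterate_fslope, zero_add,
    FormalMultilinearSeries.coeff_ofScalars]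

theorem AnalyticAt.eq_pow_mul_iterate_dslope {𝕜 : Type*} [NontriviallyNormedField 𝕜]
    [CompleteSpace 𝕜] [CharZero 𝕜] {f : 𝕜 → 𝕜} {z₀ : 𝕜} (hf : AnalyticAt 𝕜 f z₀) {n : ℕ}
    (hvanish : ∀ k < n, iteratedDeriv k f z₀ = 0) (z : 𝕜) :
    f z = (z - z₀) ^ n * (swap dslope z₀)^[n] f z := by
  rw [← smul_eq_mul, pow_sub_smul_iterate_dslope_of_zero n fun k hk ↦ by
    rw [hf.iterate_dslope_apply_self, hvanish k hk, zero_div]]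

theorem DifferentiableOn.iterate_dslope {E : Type*} [NormedAddCommGroup E] [NormedSpace ℂ E]
    [CompleteSpace E] {f : ℂ → E} {s : Set ℂ} {c : ℂ} (hf : DifferentiableOn ℂ f s)
    (hs : s ∈ 𝓝 c) (k : ℕ) : DifferentiableOn ℂ ((swap dslope c)^[k] f) s := by
  induction k with
  | zero => exact hf
  | succ k ih => rw [iterate_succ_apply']; exact (differentiableOn_dslope hs).2 ih

theorem MonotoneOn.pow_mul {G : ℝ → ℝ} {s : Set ℝ} (hs : s ⊆ Ici 0) (hG : MonotoneOn G s)
    (hG0 : ∀ x ∈ s, 0 ≤ G x) (k : ℕ) : MonotoneOn (fun x ↦ x ^ k * G x) s :=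
  MonotoneOn.mul (fun _ hx _ _ hxy ↦ pow_le_pow_left₀ (hs hx) hxy k) hG
    (fun _ hx ↦ pow_nonneg (hs hx) k) hG0

theorem MonotoneOn.strictMonoOn_pow_mul {G : ℝ → ℝ} {s : Set ℝ} (hs : s ⊆ Ici 0)
    (hG : MonotoneOn G s) (hG0 : ∀ x ∈ s, 0 < G x) {k : ℕ} (hk : k ≠ 0) :
    StrictMonoOn (fun x ↦ x ^ k * G x) s := fun x hx y hy hxy ↦
  calc x ^ k * G x < y ^ k * G x := by gcongr; exacts [hG0 x hx, hs hx]
    _ ≤ y ^ k * G y := by gcongr; exacts [pow_nonneg (hs hy) k, hG hx hy hxy.le]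

theorem ofReal_mem_ball_zero_one {x : ℝ} (hx : x ∈ Ico (0 : ℝ) 1) : (x : ℂ) ∈ ball (0 : ℂ) 1 := by
  simpa [abs_of_nonneg hx.1] using hx.2

def SatisfiesJack (f : ℂ → ℂ) : Prop :=
  ∀ z ∈ ball (0 : ℂ) 1, ‖f z‖ ≤ ‖f ((‖z‖ : ℝ) : ℂ)‖

namespace SatisfiesJack

variable {f g : ℂ → ℂ}

theorem of_eq_pow_mul (hf : SatisfiesJack f) {n : ℕ} (hfg : ∀ z, f z = z ^ n * g z) :
    SatisfiesJack g := by
  intro z hz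
  rcases eq_or_ne z 0 with rfl | hz0
  · simp
  have h := hf z hz
  rw [hfg, hfg, norm_mul, norm_mul, norm_pow, norm_pow, norm_real,
    Real.norm_of_nonneg (norm_nonneg z)] at h
  exact le_of_mul_le_mul_left h (by positivity)

theorem norm_le (hJ : SatisfiesJack f) (hf : DifferentiableOn ℂ f (ball 0 1)) {r : ℝ}
    (hr : r < 1) {z : ℂ} (hz : ‖z‖ ≤ r) : ‖f z‖ ≤ ‖f r‖ := by
  rcases (norm_nonneg z).trans hz |>.eq_or_lt with rfl | hr0
  · simp [norm_le_zero_iff.1 hz]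
  have hsub : closedBall (0 : ℂ) r ⊆ ball 0 1 := closedBall_subset_ball hr
  refine norm_le_of_forall_mem_frontier_norm_le isBounded_ball
    (hf.mono (by rwa [closure_ball 0 hr0.ne'])).diffContOnCl (fun w hw ↦ ?_)
    (by rw [closure_ball 0 hr0.ne']; simpa using hz)
  rw [frontier_ball 0 hr0.ne', mem_sphere_zero_iff_norm] at hw
  simpa [hw] using hJ w (hsub (by simp [hw]))

theorem monotoneOn_norm (hJ : SatisfiesJack f) (hf : DifferentiableOn ℂ f (ball 0 1)) :
    MonotoneOn (fun x : ℝ ↦ ‖f x‖) (Ico 0 1) := fun x hx _ hy hxy ↦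
  hJ.norm_le hf hy.2 (by simpa [abs_of_nonneg hx.1] using hxy)

theorem isMaxOn_norm_sq_circleMap (hJ : SatisfiesJack f) {r : ℝ} (hr : r ∈ Ico 0 1) :
    IsMaxOn (fun θ ↦ ‖f (circleMap 0 r θ)‖ ^ 2) univ 0 := fun θ _ ↦ by
  have h := hJ (circleMap 0 r θ) (by simpa [abs_of_nonneg hr.1] using hr.2)
  simp only [norm_circleMap_zero, abs_of_nonneg hr.1] at h
  simpa [circleMap_apply_zero, zero_add] using pow_le_pow_left₀ (norm_nonneg _) h 2

theorem im_conj_mul_deriv_eq_zero (hJ : SatisfiesJack f) (hf : DifferentiableOn ℂ f (ball 0 1))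
    {r : ℝ} (hr : r ∈ Ioo 0 1) : (conj (f r) * deriv f r).im = 0 := by
  have hd : HasDerivAt f (deriv f (circleMap 0 r 0)) (circleMap 0 r 0) := by
    simpa [circleMap_apply_zero, zero_add] using
      hf.hasDerivAt (isOpen_ball.mem_nhds (ofReal_mem_ball_zero_one (Ioo_subset_Ico_self hr)))
  have h := (hJ.isMaxOn_norm_sq_circleMap (Ioo_subset_Ico_self hr)).isLocalMax univ_mem
    |>.hasDerivAt_eq_zero hd.comp_circleMap.norm_sq
  simp only [circleMap_apply_zero, zero_add, Complex.inner] at h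
  refine (mul_eq_zero.1 ?_).resolve_left hr.1.ne'
  simp only [mul_re, mul_im, conj_re, conj_im, ofReal_re, ofReal_im, I_re, I_im] at h ⊢
  linear_combination -h / 2

theorem mul_norm_deriv_sq_le (hJ : SatisfiesJack f) (hf : DifferentiableOn ℂ f (ball 0 1))
    {r : ℝ} (hr : r ∈ Ioo 0 1) :
    r * ‖deriv f r‖ ^ 2 ≤
      (conj (f r) * deriv f r).re + r * (conj (f r) * deriv (deriv f) r).re := by
  set c := circleMap 0 r
  have hc : ∀ θ, c θ ∈ ball 0 1 := fun θ ↦ by simpa [c, abs_of_pos hr.1] using hr.2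
  have hw : ∀ θ, HasDerivAt (fun t ↦ f (c t)) (deriv f (c θ) * (c θ * I)) θ := fun θ ↦
    (hf.hasDerivAt (isOpen_ball.mem_nhds (hc θ))).comp_circleMap
  have hv : HasDerivAt (fun t ↦ deriv f (c t) * (c t * I))
      (deriv (deriv f) (c 0) * (c 0 * I) * (c 0 * I) + deriv f (c 0) * (c 0 * I * I)) 0 :=
    ((hf.deriv isOpen_ball).hasDerivAt (isOpen_ball.mem_nhds (hc 0))).comp_circleMap.mul
      ((hasDerivAt_circleMap 0 r 0).mul_const I)
  have hψ : deriv (fun θ ↦ ‖f (c θ)‖ ^ 2) =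
      fun θ ↦ 2 * inner ℝ (f (c θ)) (deriv f (c θ) * (c θ * I)) :=
    funext fun θ ↦ (hw θ).norm_sq.deriv
  have h := (hJ.isMaxOn_norm_sq_circleMap (Ioo_subset_Ico_self hr)).isLocalMax univ_mem
    |>.deriv_deriv_nonpos ((hw 0).continuousAt.norm.pow 2)
  rw [hψ, (((hw 0).inner ℝ hv).const_mul 2).deriv] at h
  simp only [c, circleMap_apply_zero, zero_add, Complex.inner] at h
  refine le_of_mul_le_mul_left ?_ hr.1
  rw [← normSq_eq_norm_sq]
  simp only [mul_re, mul_im, add_re, add_im, conj_re, conj_im, ofReal_re, ofReal_im, I_re, I_im,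
    normSq_apply] at h ⊢
  linear_combination (1 / 2) * h

theorem pos_of_pos_zero (hJ : SatisfiesJack f) (hf : DifferentiableOn ℂ f (ball 0 1))
    (h0 : 0 < f 0) {x : ℝ} (hx : x ∈ Ico 0 1) : 0 < f x := by
  have hne : ∀ t ∈ Ico (0 : ℝ) 1, f t ≠ 0 := fun t ht ↦ norm_pos_iff.1 <|
    (norm_pos_iff.2 h0.ne').trans_le (hJ.norm_le hf ht.2 (by simpa using ht.1))
  have hcont : ContinuousOn (fun t : ℝ ↦ f t) (Ico 0 1) :=
    hf.continuousOn.comp continuous_ofReal.continuousOn fun _ ↦ ofReal_mem_ball_zero_one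
  have hconst := constant_Ico_of_hasDerivAt_zero (u := fun t : ℝ ↦ f t / ‖f t‖)
    (hcont.div (continuous_ofReal.comp_continuousOn hcont.norm) fun t ht ↦ by
      exact_mod_cast norm_ne_zero_iff.2 (hne t ht))
    (fun t ht ↦ HasDerivAt.div_norm_of_im_conj_mul_eq_zero
      (hf.hasDerivAt (isOpen_ball.mem_nhds
        (ofReal_mem_ball_zero_one (Ioo_subset_Ico_self ht)))).comp_ofReal
      (hne t (Ioo_subset_Ico_self ht)) (hJ.im_conj_mul_deriv_eq_zero hf ht)) x hx
  have hnorm : (‖f x‖ : ℂ) ≠ 0 := by exact_mod_cast norm_ne_zero_iff.2 (hne x hx)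
  rw [ofReal_zero, ← eq_coe_norm_of_nonneg h0.le, div_self h0.ne', div_eq_one_iff_eq hnorm]
    at hconst
  rw [hconst]
  exact zero_lt_real.2 (norm_pos_iff.2 (hne x hx))

theorem re_deriv_deriv_nonneg (hJ : SatisfiesJack f) (hf : DifferentiableOn ℂ f (ball 0 1))
    (hpos : ∀ x ∈ Ioo (0 : ℝ) 1, 0 < f x)
    (hmono : MonotoneOn (fun x : ℝ ↦ (f x).re / x) (Ioo 0 1)) {r : ℝ} (hr : r ∈ Ioo 0 1) :
    0 ≤ (deriv (deriv f) r).re := by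
  obtain ⟨hfr, hfim⟩ := pos_iff.1 (hpos r hr)
  have hreal : f r = (f r).re := Complex.ext rfl (by simp [← hfim])
  have hd : HasDerivAt (fun x : ℝ ↦ (f x).re) (deriv f r).re r :=
    (hf.hasDerivAt (isOpen_ball.mem_nhds
      (ofReal_mem_ball_zero_one (Ioo_subset_Ico_self hr)))).real_of_complex
  have hslope : (f r).re ≤ r * (deriv f r).re :=
    hd.le_mul_of_monotoneOn_div hr.1 (isOpen_Ioo.mem_nhds hr) hmono
  have hf' : 0 < (deriv f r).re := pos_of_mul_pos_right (hfr.trans_le hslope) hr.1.le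
  have hsecond := hJ.mul_norm_deriv_sq_le hf hr
  rw [hreal, conj_ofReal, re_ofReal_mul, re_ofReal_mul, ← normSq_eq_norm_sq] at hsecond
  have hnormSq := re_sq_le_normSq (deriv f r)
  have : 0 ≤ (r * (f r).re) * (deriv (deriv f) r).re := by nlinarith
  exact nonneg_of_mul_nonneg_right this (mul_pos hr.1 hfr)

theorem convexOn_re (hJ : SatisfiesJack f) (hf : DifferentiableOn ℂ f (ball 0 1))
    (hpos : ∀ x ∈ Ioo (0 : ℝ) 1, 0 < f x)
    (hmono : MonotoneOn (fun x : ℝ ↦ (f x).re / x) (Ioo 0 1)) :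
    ConvexOn ℝ (Ico 0 1) (fun x : ℝ ↦ (f x).re) := by
  have hnhds : ∀ x ∈ Ioo (0 : ℝ) 1, ball (0 : ℂ) 1 ∈ 𝓝 (x : ℂ) :=
    fun x hx ↦ isOpen_ball.mem_nhds (ofReal_mem_ball_zero_one (Ioo_subset_Ico_self hx))
  refine convexOn_of_hasDerivWithinAt2_nonneg (convex_Ico 0 1)
    (continuous_re.comp_continuousOn
      (hf.continuousOn.comp continuous_ofReal.continuousOn fun _ ↦ ofReal_mem_ball_zero_one))
    (f' := fun x ↦ (deriv f x).re) (f'' := fun x ↦ (deriv (deriv f) x).re) ?_ ?_ ?_ <;>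
    intro x hx <;> rw [interior_Ico] at hx
  · exact (hf.hasDerivAt (hnhds x hx)).real_of_complex.hasDerivWithinAt
  · exact ((hf.deriv isOpen_ball).hasDerivAt (hnhds x hx)).real_of_complex.hasDerivWithinAt
  · exact hJ.re_deriv_deriv_nonneg hf hpos hmono hx

end SatisfiesJack

/-- **Schwarz–Jack lemma** (Theorem 2.1, first part).
If `f` is holomorphic on the unit disk, vanishes to order `n ≥ 1` at `0` with
`f⁽ⁿ⁾(0) > 0`, and satisfies the Jack condition `|f(z)| ≤ |f(|z|)|`, then `f` is
real and positive on `(0,1)`, and its restriction to `[0,1)` is strictly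
increasing and convex. -/
theorem schwarz_jack (f : ℂ → ℂ) (n : ℕ) (hn : 1 ≤ n)
    (hf : DifferentiableOn ℂ f (ball (0 : ℂ) 1))
    (hvanish : ∀ k < n, iteratedDeriv k f 0 = 0)
    (hpos : (iteratedDeriv n f 0).im = 0 ∧ 0 < (iteratedDeriv n f 0).re)
    (hJack : ∀ z ∈ ball (0 : ℂ) 1,
      ‖f z‖ ≤ ‖f ((‖z‖ : ℝ) : ℂ)‖) :
    (∀ x : ℝ, x ∈ Ico (0 : ℝ) 1 → (f x).im = 0) ∧
    (∀ x : ℝ, x ∈ Ioo (0 : ℝ) 1 → 0 < (f x).re) ∧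
    StrictMonoOn (fun x : ℝ => (f x).re) (Ico (0 : ℝ) 1) ∧
    ConvexOn ℝ (Ico (0 : ℝ) 1) (fun x : ℝ => (f x).re) := by
  have hJ : SatisfiesJack f := hJack
  have hball : ball (0 : ℂ) 1 ∈ 𝓝 0 := ball_mem_nhds 0 one_pos
  have hf0 : AnalyticAt ℂ f 0 := hf.analyticAt hball
  obtain ⟨g, hfg, hg, hg0⟩ : ∃ g : ℂ → ℂ,
      (∀ z, f z = z ^ n * g z) ∧ DifferentiableOn ℂ g (ball 0 1) ∧ 0 < g 0 := by
    refine ⟨_, by simpa using hf0.eq_pow_mul_iterate_dslope hvanish, hf.iterate_dslope hball n, ?_⟩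
    rw [hf0.iterate_dslope_apply_self n]
    exact div_pos (pos_iff.2 ⟨hpos.2, hpos.1.symm⟩) (zero_lt_real.2 (by positivity))
  have hgJ : SatisfiesJack g := hJ.of_eq_pow_mul hfg
  have hgmono := hgJ.monotoneOn_norm hg
  have hgpos : ∀ x ∈ Ico (0 : ℝ) 1, 0 < g x := fun _ hx ↦ hgJ.pos_of_pos_zero hg hg0 hx
  have hG : ∀ x ∈ Ico (0 : ℝ) 1, 0 < ‖g x‖ := fun x hx ↦ norm_pos_iff.2 (hgpos x hx).ne'
  have hfx : ∀ x ∈ Ico (0 : ℝ) 1, f x = ((x ^ n * ‖g x‖ : ℝ) : ℂ) := fun x hx ↦ by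
    rw [hfg, ofReal_mul, ofReal_pow, ← eq_coe_norm_of_nonneg (hgpos x hx).le]
  have hfpos : ∀ x ∈ Ioo (0 : ℝ) 1, 0 < x ^ n * ‖g x‖ := fun x hx ↦
    mul_pos (pow_pos hx.1 n) (hG x (Ioo_subset_Ico_self hx))
  refine ⟨fun x hx ↦ by rw [hfx x hx, ofReal_im], fun x hx ↦ ?_, ?_, ?_⟩
  · rw [hfx x (Ioo_subset_Ico_self hx), ofReal_re]
    exact hfpos x hx
  · exact hgmono.strictMonoOn_pow_mul (fun _ hx ↦ hx.1) hG (by omega : n ≠ 0)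
      |>.congr fun x hx ↦ by rw [hfx x hx, ofReal_re]
  · refine hJ.convexOn_re hf (fun x hx ↦ ?_) ?_
    · rw [hfx x (Ioo_subset_Ico_self hx)]
      exact zero_lt_real.2 (hfpos x hx)
    refine (hgmono.mono Ioo_subset_Ico_self).pow_mul (fun _ hx ↦ hx.1.le)
      (fun x hx ↦ (hG x (Ioo_subset_Ico_self hx)).le) (n - 1) |>.congr fun x hx ↦ ?_
    rw [hfx x (Ioo_subset_Ico_self hx), ofReal_re, ← pow_sub_one_mul (by omega : n ≠ 0)]
    field_simp [hx.1.ne']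
end

section
/- Let f be holomorphic on the open unit disk 𝔻 with f(0) = 0, suppose f satisfies the Jack condition, and suppose f(x) is a positive real number for every x ∈ (0,1). Then for all 0 < s < r < 1, one has f(s)/f(r) ≤ s/r, i.e. r·f(s) ≤ s·f(r). -/
/-!
By the Jack condition `|f|` is bounded by `f(r)` on the circle `|z| = r`, hence on the whole disk
of radius `r` by the maximum modulus principle. The Schwarz lemma applied to `f` on that disk
then gives `|f(s)| ≤ f(r) · s / r`.
-/

open Complex Metric Set

section SchwarzOnClosedBall

variable {E F : Type*} [NormedAddCommGroup E] [NormedSpace ℂ E] [Nontrivial E]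
  [NormedAddCommGroup F] [NormedSpace ℂ F] {f : E → F} {c : E} {r C : ℝ}

theorem Complex.norm_le_of_forall_mem_sphere_norm_le (hr : r ≠ 0)
    (hf : DifferentiableOn ℂ f (closedBall c r)) (hC : ∀ w ∈ sphere c r, ‖f w‖ ≤ C) {z : E}
    (hz : z ∈ closedBall c r) : ‖f z‖ ≤ C := by
  refine norm_le_of_forall_mem_frontier_norm_le isBounded_ball ?_ ?_ (by rwa [closure_ball c hr])
  · exact hf.diffContOnCl_ball subset_rfl
  · rwa [frontier_ball c hr]

theorem Complex.norm_le_div_mul_norm_of_forall_mem_sphere_norm_le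
    (hf : DifferentiableOn ℂ f (closedBall 0 r)) (hf0 : f 0 = 0)
    (hC : ∀ w ∈ sphere 0 r, ‖f w‖ ≤ C) {z : E} (hz : z ∈ ball 0 r) : ‖f z‖ ≤ C / r * ‖z‖ := by
  have hr : 0 < r := nonempty_ball.mp ⟨z, hz⟩
  have hmaps : MapsTo f (ball 0 r) (closedBall (f 0) C) := fun w hw ↦ by
    rw [hf0, mem_closedBall_zero_iff]
    exact norm_le_of_forall_mem_sphere_norm_le hr.ne' hf hC (ball_subset_closedBall hw)
  simpa [hf0] using dist_le_div_mul_dist_of_mapsTo_ball (hf.mono ball_subset_closedBall) hmaps hz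

end SchwarzOnClosedBall

/-- Inequality (2.3) in the proof of the Schwarz–Jack lemma:
if `f` is holomorphic on the unit disk with `f(0) = 0`, satisfies the Jack
condition, and is real and positive on `(0,1)`, then `f(s)/f(r) ≤ s/r`, i.e.
`r·f(s) ≤ s·f(r)`, for `0 < s < r < 1`. -/
theorem jack_monotone_ratio (f : ℂ → ℂ)
    (hf : DifferentiableOn ℂ f (ball (0 : ℂ) 1))
    (hf0 : f 0 = 0)
    (hJack : ∀ z ∈ ball (0 : ℂ) 1,
      ‖f z‖ ≤ ‖f ((‖z‖ : ℝ) : ℂ)‖)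
    (hreal : ∀ x : ℝ, x ∈ Ioo (0 : ℝ) 1 → (f x).im = 0 ∧ 0 < (f x).re) :
    ∀ s r : ℝ, 0 < s → s < r → r < 1 →
      r * (f s).re ≤ s * (f r).re := by
  intro s r hs hsr hr1
  have hr : 0 < r := hs.trans hsr
  have hnorm_fr : ‖f r‖ = (f r).re := by
    obtain ⟨him, hre⟩ := hreal r ⟨hr, hr1⟩
    rw [← abs_re_eq_norm.mpr him, abs_of_pos hre]
  have hsub : closedBall (0 : ℂ) r ⊆ ball 0 1 := closedBall_subset_ball (by exact_mod_cast hr1)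
  have hsphere : ∀ w ∈ sphere (0 : ℂ) r, ‖f w‖ ≤ ‖f r‖ := fun w hw ↦ by
    simpa [mem_sphere_zero_iff_norm.mp hw] using hJack w (hsub (sphere_subset_closedBall hw))
  have hschwarz : ‖f s‖ ≤ ‖f r‖ / r * s := by
    simpa [abs_of_pos hs] using
      norm_le_div_mul_norm_of_forall_mem_sphere_norm_le (hf.mono hsub) hf0 hsphere
        (z := (s : ℂ)) (by simpa [abs_of_pos hs] using hsr)
  calc r * (f s).re ≤ r * ‖f s‖ := by gcongr; exact re_le_norm _
    _ ≤ r * (‖f r‖ / r * s) := by gcongr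
    _ = s * (f r).re := by rw [hnorm_fr]; field_simp
end

section
/- Let f be holomorphic on the open unit disk 𝔻 with f(0) = 0, suppose f satisfies the Jack condition, and suppose f(x) is a positive real number for every x ∈ (0,1). Then for all 0 < s < r < 1, the derivative f'(s) is a real number and satisfies f'(s) ≤ (f(r) − f(s))/(r − s). -/
/-!
On the disk of radius `r` the Jack condition and the maximum modulus principle give
`|f| ≤ M := f(r)`. For a holomorphic self-map of a disk, Schwarz–Pick (Schwarz's lemma conjugated
by disk automorphisms) bounds `M |f'(s)| (r² - s²) ≤ r (M² - |f(s)|²)`, and since `f(0) = 0` the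
Schwarz lemma gives `|f(s)| r ≤ M s`; together these yield `|f'(s)| ≤ (M - f(s)) / (r - s)`.
That `f'(s)` is real follows from `f` being real on `(0, 1)`.
-/

open Complex Metric Set ComplexConjugate Topology

namespace Complex

noncomputable def diskMobius (a z : ℂ) : ℂ := (z - a) / (1 - conj a * z)

section diskMobius

variable {a z : ℂ}

lemma norm_sq_one_sub_conj_mul_sub_norm_sq_sub (a z : ℂ) :
    ‖1 - conj a * z‖ ^ 2 - ‖z - a‖ ^ 2 = (1 - ‖a‖ ^ 2) * (1 - ‖z‖ ^ 2) := by
  simp only [← normSq_eq_norm_sq, normSq_apply, sub_re, sub_im, one_re, one_im, mul_re, mul_im,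
    conj_re, conj_im]
  ring

lemma one_sub_conj_mul_ne_zero (ha : ‖a‖ < 1) (hz : ‖z‖ ≤ 1) : 1 - conj a * z ≠ 0 := by
  have : ‖conj a * z‖ < 1 := by
    rw [norm_mul, RCLike.norm_conj]
    nlinarith [norm_nonneg a, norm_nonneg z]
  intro h
  rw [← sub_eq_zero.mp h, norm_one] at this
  exact lt_irrefl _ this

lemma norm_one_sub_conj_mul_self (ha : ‖a‖ ≤ 1) : ‖1 - conj a * a‖ = 1 - ‖a‖ ^ 2 := by
  rw [conj_mul', ← ofReal_pow, ← ofReal_one, ← ofReal_sub, norm_real, Real.norm_of_nonneg]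
  nlinarith [norm_nonneg a]

lemma norm_diskMobius_le_one (ha : ‖a‖ < 1) (hz : ‖z‖ ≤ 1) : ‖diskMobius a z‖ ≤ 1 := by
  have hden := norm_pos_iff.mpr (one_sub_conj_mul_ne_zero ha hz)
  rw [diskMobius, norm_div, div_le_one hden, ← sq_le_sq₀ (norm_nonneg _) hden.le]
  have : 0 ≤ (1 - ‖a‖ ^ 2) * (1 - ‖z‖ ^ 2) := by
    apply mul_nonneg <;> nlinarith [norm_nonneg a, norm_nonneg z]
  linarith [norm_sq_one_sub_conj_mul_sub_norm_sq_sub a z]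

lemma norm_diskMobius_lt_one (ha : ‖a‖ < 1) (hz : ‖z‖ < 1) : ‖diskMobius a z‖ < 1 := by
  have hden := norm_pos_iff.mpr (one_sub_conj_mul_ne_zero ha hz.le)
  rw [diskMobius, norm_div, div_lt_one hden, ← sq_lt_sq₀ (norm_nonneg _) hden.le]
  have : 0 < (1 - ‖a‖ ^ 2) * (1 - ‖z‖ ^ 2) := by
    apply mul_pos <;> nlinarith [norm_nonneg a, norm_nonneg z]
  linarith [norm_sq_one_sub_conj_mul_sub_norm_sq_sub a z]

lemma mapsTo_diskMobius_ball (ha : ‖a‖ < 1) : MapsTo (diskMobius a) (ball 0 1) (ball 0 1) :=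
  fun _ hz ↦ mem_ball_zero_iff.mpr <| norm_diskMobius_lt_one ha (mem_ball_zero_iff.mp hz)

@[simp]
lemma diskMobius_self (a : ℂ) : diskMobius a a = 0 := by simp [diskMobius]

@[simp]
lemma diskMobius_neg_zero (a : ℂ) : diskMobius (-a) 0 = a := by simp [diskMobius]

lemma hasDerivAt_diskMobius (h : 1 - conj a * z ≠ 0) :
    HasDerivAt (diskMobius a) ((1 - conj a * a) / (1 - conj a * z) ^ 2) z := by
  have hnum : HasDerivAt (fun w ↦ w - a) 1 z := (hasDerivAt_id z).sub_const a
  have hden : HasDerivAt (fun w ↦ 1 - conj a * w) (-conj a) z := by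
    simpa using ((hasDerivAt_id z).const_mul (conj a)).const_sub 1
  exact (hnum.div hden h).congr_deriv (by ring)

lemma hasDerivAt_diskMobius_self (ha : ‖a‖ < 1) :
    HasDerivAt (diskMobius a) (1 - conj a * a)⁻¹ a :=
  (hasDerivAt_diskMobius (one_sub_conj_mul_ne_zero ha ha.le)).congr_deriv <| by
    have := one_sub_conj_mul_ne_zero ha ha.le
    field_simp

lemma hasDerivAt_diskMobius_neg_zero (a : ℂ) :
    HasDerivAt (diskMobius (-a)) (1 - conj a * a) 0 :=
  (hasDerivAt_diskMobius (by simp)).congr_deriv (by simp)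

end diskMobius

theorem norm_deriv_mul_le_of_mapsTo_unitBall {g : ℂ → ℂ} (hg : DifferentiableOn ℂ g (ball 0 1))
    (hmaps : MapsTo g (ball 0 1) (closedBall 0 1)) {a : ℂ} (ha : ‖a‖ < 1) (hga : ‖g a‖ < 1) :
    ‖deriv g a‖ * (1 - ‖a‖ ^ 2) ≤ 1 - ‖g a‖ ^ 2 := by
  set b := g a
  -- `F` fixes `0`, so the Schwarz lemma bounds `‖F'(0)‖`, which the chain rule expresses via `g'(a)`.
  set F := diskMobius b ∘ g ∘ diskMobius (-a)
  have hφ : MapsTo (diskMobius (-a)) (ball 0 1) (ball 0 1) := mapsTo_diskMobius_ball (by simpa)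
  have hF_diff : DifferentiableOn ℂ F (ball 0 1) := by
    intro z hz
    have hψ := (hasDerivAt_diskMobius (one_sub_conj_mul_ne_zero hga
      (mem_closedBall_zero_iff.mp (hmaps (hφ hz))))).differentiableAt
    have hgφ := hg.differentiableAt (isOpen_ball.mem_nhds (hφ hz))
    have hφ' := hasDerivAt_diskMobius
      (one_sub_conj_mul_ne_zero (a := -a) (by simpa) (mem_ball_zero_iff.mp hz).le)
    exact (hψ.comp z (hgφ.comp z hφ'.differentiableAt)).differentiableWithinAt
  have hF_maps : MapsTo F (ball 0 1) (closedBall (F 0) 1) := by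
    intro z hz
    simpa [F, b] using norm_diskMobius_le_one hga (mem_closedBall_zero_iff.mp (hmaps (hφ hz)))
  have hg' : HasDerivAt g (deriv g a) (diskMobius (-a) 0) := by
    rw [diskMobius_neg_zero]
    exact (hg.differentiableAt (isOpen_ball.mem_nhds (mem_ball_zero_iff.mpr ha))).hasDerivAt
  have hψ' : HasDerivAt (diskMobius b) (1 - conj b * b)⁻¹ (g (diskMobius (-a) 0)) := by
    rw [diskMobius_neg_zero]
    exact hasDerivAt_diskMobius_self hga
  have hF_deriv := hψ'.comp 0 (hg'.comp 0 (hasDerivAt_diskMobius_neg_zero a))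
  have h := norm_deriv_le_one_of_mapsTo_ball hF_diff hF_maps one_pos
  rw [hF_deriv.deriv, norm_mul, norm_mul, norm_inv, norm_one_sub_conj_mul_self hga.le,
    norm_one_sub_conj_mul_self ha.le, inv_mul_le_iff₀ (by nlinarith [norm_nonneg b]), mul_one] at h
  exact h

theorem norm_deriv_mul_le_of_mapsTo_ball {f : ℂ → ℂ} {R M : ℝ}
    (hf : DifferentiableOn ℂ f (ball 0 R)) (hmaps : MapsTo f (ball 0 R) (closedBall 0 M))
    {z : ℂ} (hz : ‖z‖ < R) (hfz : ‖f z‖ < M) :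
    M * ‖deriv f z‖ * (R ^ 2 - ‖z‖ ^ 2) ≤ R * (M ^ 2 - ‖f z‖ ^ 2) := by
  have hR : 0 < R := (norm_nonneg z).trans_lt hz
  have hM : 0 < M := (norm_nonneg _).trans_lt hfz
  set g : ℂ → ℂ := fun w ↦ (M : ℂ)⁻¹ * f (R * w)
  have hscale : MapsTo (fun w : ℂ ↦ (R : ℂ) * w) (ball 0 1) (ball 0 R) := by
    intro w hw
    rw [mem_ball_zero_iff, norm_mul, norm_real, Real.norm_of_nonneg hR.le] at *
    nlinarith
  have hg_diff : DifferentiableOn ℂ g (ball 0 1) := (hf.comp (by fun_prop) hscale).const_mul _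
  have hg_maps : MapsTo g (ball 0 1) (closedBall 0 1) := by
    intro w hw
    rw [mem_closedBall_zero_iff, norm_mul, norm_inv, norm_real, Real.norm_of_nonneg hM.le,
      inv_mul_le_one₀ hM]
    exact mem_closedBall_zero_iff.mp (hmaps (hscale hw))
  have hRa : (R : ℂ) * (z / R) = z := mul_div_cancel₀ z (ofReal_ne_zero.mpr hR.ne')
  have hf' : HasDerivAt f (deriv f z) (R * (z / R)) := by
    rw [hRa]
    exact (hf.differentiableAt (isOpen_ball.mem_nhds (mem_ball_zero_iff.mpr hz))).hasDerivAt
  have hg' : HasDerivAt g ((M : ℂ)⁻¹ * (deriv f z * R)) (z / R) :=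
    (hf'.comp (z / R) ((hasDerivAt_id _).const_mul (R : ℂ)) |>.congr_deriv (by simp)).const_mul _
  have h := norm_deriv_mul_le_of_mapsTo_unitBall hg_diff hg_maps (a := z / R) ?_ ?_
  · simp only [g, hRa, hg'.deriv, norm_mul, norm_inv, norm_div, norm_real,
      Real.norm_of_nonneg hM.le, Real.norm_of_nonneg hR.le] at h
    field_simp at h
    exact h
  · rw [norm_div, norm_real, Real.norm_of_nonneg hR.le, div_lt_one hR]
    exact hz
  · simp only [g, hRa, norm_mul, norm_inv, norm_real, Real.norm_of_nonneg hM.le]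
    rwa [inv_mul_lt_one₀ hM]

theorem norm_deriv_le_sub_div_sub_of_mapsTo_ball {f : ℂ → ℂ} {R M : ℝ}
    (hf : DifferentiableOn ℂ f (ball 0 R)) (hmaps : MapsTo f (ball 0 R) (closedBall 0 M))
    (hf0 : f 0 = 0) {z : ℂ} (hz : ‖z‖ < R) :
    ‖deriv f z‖ ≤ (M - ‖f z‖) / (R - ‖z‖) := by
  have hR : 0 < R := (norm_nonneg z).trans_lt hz
  have hz_ball : z ∈ ball 0 R := mem_ball_zero_iff.mpr hz
  have hM : 0 ≤ M := by simpa [hf0] using hmaps (mem_ball_self hR)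
  rcases hM.eq_or_lt with rfl | hM
  · have hf_zero : f =ᶠ[𝓝 z] fun _ ↦ 0 := by
      filter_upwards [isOpen_ball.mem_nhds hz_ball] with w hw
      simpa using hmaps hw
    have hfz : f z = 0 := norm_le_zero_iff.mp (mem_closedBall_zero_iff.mp (hmaps hz_ball))
    simp [hf_zero.deriv_eq, hfz]
  have hschwarz : ‖f z‖ * R ≤ M * ‖z‖ := by
    have := dist_le_div_mul_dist_of_mapsTo_ball hf (by rwa [hf0]) hz_ball
    rwa [hf0, dist_zero_right, dist_zero_right, div_mul_eq_mul_div, le_div_iff₀ hR] at this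
  have hfz : ‖f z‖ < M := by nlinarith [norm_nonneg z]
  have hpick := norm_deriv_mul_le_of_mapsTo_ball hf hmaps hz hfz
  -- `R (M² - ‖f z‖²) ≤ M (R + ‖z‖) (M - ‖f z‖)` is the Schwarz bound `hschwarz`.
  have key : M * (R + ‖z‖) * (‖deriv f z‖ * (R - ‖z‖)) ≤ M * (R + ‖z‖) * (M - ‖f z‖) := by
    nlinarith [mul_le_mul_of_nonneg_left hschwarz (sub_nonneg.mpr hfz.le)]
  rw [le_div_iff₀ (by linarith)]
  exact le_of_mul_le_mul_left key (by positivity)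

lemma im_deriv_eq_zero_of_eventually_im_eq_zero {f : ℂ → ℂ} {x : ℝ}
    (hf : DifferentiableAt ℂ f x) (h : ∀ᶠ y : ℝ in 𝓝 x, (f y).im = 0) :
    (deriv f x).im = 0 := by
  have hd : HasDerivAt (fun y : ℝ ↦ (f y).im) (deriv f x).im x :=
    imCLM.hasFDerivAt.comp_hasDerivAt x hf.hasDerivAt.comp_ofReal
  exact hd.unique ((hasDerivAt_const x 0).congr_of_eventuallyEq h)

end Complex

def JackCondition (f : ℂ → ℂ) : Prop :=
  ∀ z ∈ ball (0 : ℂ) 1, ‖f z‖ ≤ ‖f ((‖z‖ : ℝ) : ℂ)‖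

theorem JackCondition.mapsTo_closedBall {f : ℂ → ℂ} (hJack : JackCondition f)
    (hf : DifferentiableOn ℂ f (ball 0 1)) {r : ℝ} (hr0 : 0 < r) (hr1 : r < 1) :
    MapsTo f (closedBall 0 r) (closedBall 0 ‖f r‖) := by
  have hsub : closure (ball (0 : ℂ) r) ⊆ ball 0 1 := by
    rw [closure_ball 0 hr0.ne']
    exact closedBall_subset_ball hr1
  intro z hz
  rw [← closure_ball 0 hr0.ne'] at hz
  refine mem_closedBall_zero_iff.mpr <| norm_le_of_forall_mem_frontier_norm_le isBounded_ball
    (hf.mono hsub).diffContOnCl (fun w hw ↦ ?_) hz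
  rw [frontier_ball 0 hr0.ne', mem_sphere_zero_iff_norm] at hw
  simpa [hw] using hJack w (mem_ball_zero_iff.mpr (hw ▸ hr1))

/-- The derivative estimate in the proof of the Schwarz–Jack lemma:
if `f` is holomorphic on the unit disk with `f(0) = 0`, satisfies the Jack
condition, and is real and positive on `(0,1)`, then for `0 < s < r < 1` the
derivative `f'(s)` is real and `f'(s) ≤ (f(r) − f(s))/(r − s)`. -/
theorem jack_deriv_bound (f : ℂ → ℂ)
    (hf : DifferentiableOn ℂ f (ball (0 : ℂ) 1))
    (hf0 : f 0 = 0)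
    (hJack : ∀ z ∈ ball (0 : ℂ) 1,
      ‖f z‖ ≤ ‖f ((‖z‖ : ℝ) : ℂ)‖)
    (hreal : ∀ x : ℝ, x ∈ Ioo (0 : ℝ) 1 → (f x).im = 0 ∧ 0 < (f x).re) :
    ∀ s r : ℝ, 0 < s → s < r → r < 1 →
      (deriv f (s : ℂ)).im = 0 ∧
      (deriv f (s : ℂ)).re ≤ ((f r).re - (f s).re) / (r - s) := by
  intro s r hs hsr hr1
  have hr0 : 0 < r := hs.trans hsr
  have hs1 : s < 1 := hsr.trans hr1
  have hnorm_eq_re : ∀ x ∈ Ioo (0 : ℝ) 1, ‖f x‖ = (f x).re := fun x hx ↦ by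
    rw [← abs_re_eq_norm.mpr (hreal x hx).1, abs_of_pos (hreal x hx).2]
  have hs_norm : ‖(s : ℂ)‖ = s := Complex.norm_of_nonneg hs.le
  have hdiff : DifferentiableAt ℂ f s :=
    hf.differentiableAt (isOpen_ball.mem_nhds (by rwa [mem_ball_zero_iff, hs_norm]))
  refine ⟨im_deriv_eq_zero_of_eventually_im_eq_zero hdiff ?_, ?_⟩
  · filter_upwards [Ioo_mem_nhds hs hs1] with x hx using (hreal x hx).1
  have hmaps := (JackCondition.mapsTo_closedBall hJack hf hr0 hr1).mono_left ball_subset_closedBall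
  have hbound := norm_deriv_le_sub_div_sub_of_mapsTo_ball (hf.mono (ball_subset_ball hr1.le))
    hmaps hf0 (z := s) (by rwa [hs_norm])
  rw [hnorm_eq_re s ⟨hs, hs1⟩, hnorm_eq_re r ⟨hr0, hr1⟩, hs_norm] at hbound
  exact (re_le_norm _).trans hbound
end

section
/- Let Ω be a simply connected, proper subdomain of ℂ containing 0, and let f be a normalized conformal mapping of 𝔻 onto Ω. If f(conj(z)) = conj(f(z)) for all z ∈ 𝔻 and, for each r ∈ (0,1), the map θ ↦ |f(r·e^{iθ})| is decreasing (antitone) on [0, π], then Ω is circularly symmetric. -/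
/-!
Since `f` commutes with conjugation, `Ω` is symmetric in the real axis and `f` is real on
`(-1, 1)`; being injective with `f'(0) > 0`, it is increasing there, hence positive on `(0, 1)`.
By the monotonicity hypothesis `|f|` is largest on the circle `|z| = ρ` at `z = ρ`, so the modulus
`|f(z₀)|` is a value `f(x)` with `0 ≤ x ≤ |z₀|`.

Let `r e^{iθ} = f(z₀)` with `0 ≤ θ' ≤ θ ≤ π` and pick `ρ ∈ (|z₀|, 1)`. Then both `r` and
`r e^{iθ}` lie in the open set `f(|z| < ρ)`. If `r e^{iθ'}` does not, the arcs of the circle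
`|w| = r` joining it to these two points cross the curve `f(|z| = ρ)` at angles `t₁ ≤ θ' ≤ t₂`.
Their preimages `ρ e^{iv₁}`, `ρ e^{iv₂}` may be taken with `v₁, v₂ ∈ [0, π]`; `|f| = r` at both,
hence in between by monotonicity, and the intermediate value theorem for `Re f` then gives a
point of `f(|z| = ρ) ⊆ Ω` equal to `r e^{±iθ'}`.
-/

open Complex Metric Set

/-- A plane domain `Ω` is circularly symmetric (about `0`) if its intersection with
each circle centred at the origin is empty, the whole circle, or a subarc centred on
the positive real axis: for every `r > 0` and angles `θ, θ'` with `|θ'| ≤ |θ| ≤ π`,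
if `r·e^{iθ} ∈ Ω` then `r·e^{iθ'} ∈ Ω`. -/
def CircularlySymmetric (Ω : Set ℂ) : Prop :=
  ∀ r θ θ' : ℝ, 0 < r → |θ'| ≤ |θ| → |θ| ≤ Real.pi →
    (r : ℂ) * Complex.exp ((θ : ℂ) * Complex.I) ∈ Ω →
    (r : ℂ) * Complex.exp ((θ' : ℂ) * Complex.I) ∈ Ω

open Filter ComplexConjugate

lemma conj_ofReal_mul_exp (r θ : ℝ) :
    conj ((r : ℂ) * exp (θ * I)) = r * exp ((-θ : ℝ) * I) := by
  rw [map_mul, conj_ofReal, ← exp_conj, map_mul, conj_ofReal, conj_I]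
  push_cast
  ring_nf

lemma norm_ofReal_mul_exp {r : ℝ} (hr : 0 ≤ r) (θ : ℝ) : ‖(r : ℂ) * exp (θ * I)‖ = r := by
  rw [norm_mul, norm_real, Real.norm_of_nonneg hr, norm_exp_ofReal_mul_I, mul_one]

lemma re_ofReal_mul_exp (r θ : ℝ) : ((r : ℂ) * exp (θ * I)).re = r * Real.cos θ := by
  rw [re_ofReal_mul, exp_ofReal_mul_I_re]

lemma im_ofReal_mul_exp (r θ : ℝ) : ((r : ℂ) * exp (θ * I)).im = r * Real.sin θ := by
  rw [im_ofReal_mul, exp_ofReal_mul_I_im]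

lemma exists_mem_Icc_pi_eq_or_conj_eq (z : ℂ) :
    ∃ v ∈ Icc 0 Real.pi, (‖z‖ : ℂ) * exp (v * I) = z ∨ (‖z‖ : ℂ) * exp (v * I) = conj z := by
  refine ⟨|arg z|, ⟨abs_nonneg _, abs_arg_le_pi z⟩, ?_⟩
  rcases abs_cases (arg z) with ⟨h, -⟩ | ⟨h, -⟩
  · exact Or.inl (by rw [h, norm_mul_exp_arg_mul_I])
  · refine Or.inr ?_
    rw [h, ← conj_ofReal_mul_exp, norm_mul_exp_arg_mul_I]

lemma eq_or_conj_eq_of_norm_eq_of_re_eq {w : ℂ} {r θ : ℝ} (hw : ‖w‖ = r)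
    (hre : w.re = r * Real.cos θ) :
    w = r * exp (θ * I) ∨ conj w = r * exp (θ * I) := by
  have him : w.im ^ 2 = (r * Real.sin θ) ^ 2 := by
    rw [← sq_norm_sub_sq_re, hw, hre]
    linear_combination (-r ^ 2) * Real.sin_sq_add_cos_sq θ
  rcases sq_eq_sq_iff_eq_or_eq_neg.mp him with h | h
  · exact Or.inl (Complex.ext (by rw [hre, re_ofReal_mul_exp]) (by rw [h, im_ofReal_mul_exp]))
  · refine Or.inr (Complex.ext ?_ ?_)
    · rw [conj_re, hre, re_ofReal_mul_exp]
    · rw [conj_im, h, neg_neg, im_ofReal_mul_exp]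

theorem IsPreconnected.inter_frontier_nonempty {X : Type*} [TopologicalSpace X] {s t : Set X}
    (hs : IsPreconnected s) (hst : (s ∩ t).Nonempty) (hst' : (s \ t).Nonempty) :
    (s ∩ frontier t).Nonempty := by
  by_contra! h
  have hfr : ∀ x ∈ s, x ∈ closure t → x ∈ interior t := fun x hx hcl => by
    by_contra hint
    exact h.subset ⟨hx, hcl, hint⟩
  obtain ⟨x, hxs, hxt⟩ := hst
  obtain ⟨y, hys, hyt⟩ := hst'
  obtain ⟨z, -, hzi, hzc⟩ := hs _ _ isOpen_interior isClosed_closure.isOpen_compl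
    (fun x hx => (em (x ∈ closure t)).imp (hfr x hx) id)
    ⟨x, hxs, hfr x hxs (subset_closure hxt)⟩
    ⟨y, hys, fun hcl => hyt (interior_subset (hfr y hys hcl))⟩
  exact hzc (interior_subset_closure hzi)

lemma frontier_image_ball_subset_image_sphere {X Y : Type*} [PseudoMetricSpace X] [ProperSpace X]
    [TopologicalSpace Y] [T2Space Y] {f : X → Y} {x : X} {ρ : ℝ}
    (hf : ContinuousOn f (closedBall x ρ)) (hopen : IsOpen (f '' ball x ρ)) :
    frontier (f '' ball x ρ) ⊆ f '' sphere x ρ := by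
  have hcl : closure (f '' ball x ρ) ⊆ f '' closedBall x ρ :=
    closure_minimal (image_mono ball_subset_closedBall)
      ((isCompact_closedBall x ρ).image_of_continuousOn hf).isClosed
  rintro w ⟨hw, hwD⟩
  rw [hopen.interior_eq] at hwD
  obtain ⟨z, hz, rfl⟩ := hcl hw
  rw [← ball_union_sphere] at hz
  exact ⟨z, hz.resolve_left fun hzb => hwD ⟨z, hzb, rfl⟩, rfl⟩

lemma AntitoneOn.eq_of_mem_uIcc {α β : Type*} [LinearOrder α] [PartialOrder β] {s : Set α}
    [s.OrdConnected] {g : α → β} (hg : AntitoneOn g s) {a b v : α} (ha : a ∈ s) (hb : b ∈ s)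
    (hab : g a = g b) (hv : v ∈ uIcc a b) : g v = g a := by
  have hvs : v ∈ s := Set.OrdConnected.uIcc_subset ‹_› ha hb hv
  rcases le_total a b with h | h
  · rw [uIcc_of_le h] at hv
    exact le_antisymm (hg ha hvs hv.1) (hab ▸ hg hvs hb hv.2)
  · rw [uIcc_of_ge h] at hv
    exact le_antisymm (hab ▸ hg hb hvs hv.1) (hg hvs ha hv.2)

lemma strictMonoOn_of_injOn_of_hasDerivAt_pos {g : ℝ → ℝ} {a b x g' : ℝ}
    (hc : ContinuousOn g (Ioo a b)) (hi : InjOn g (Ioo a b)) (hx : x ∈ Ioo a b)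
    (hd : HasDerivAt g g' x) (hg' : 0 < g') : StrictMonoOn g (Ioo a b) := by
  refine (hc.strictMonoOn_of_injOn_Ioo (hx.1.trans hx.2) hi).resolve_right fun hanti => ?_
  have hacc : AccPt x (𝓟 (Ioo a b)) := by
    simpa using (PerfectSpace.univ_preperfect x (mem_univ x)).nhds_inter (Ioo_mem_nhds hx.1 hx.2)
  exact hg'.not_ge (hd.hasDerivWithinAt.nonpos_of_antitoneOn hacc hanti.antitoneOn)

lemma ofReal_mul_exp_abs_mem_iff {Ω : Set ℂ} (hΩ : ∀ z ∈ Ω, conj z ∈ Ω) (r s : ℝ) :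
    (r : ℂ) * exp (|s| * I) ∈ Ω ↔ (r : ℂ) * exp (s * I) ∈ Ω := by
  have hneg : ∀ s : ℝ, (r : ℂ) * exp (s * I) ∈ Ω → (r : ℂ) * exp ((-s : ℝ) * I) ∈ Ω :=
    fun s hs => conj_ofReal_mul_exp r s ▸ hΩ _ hs
  rcases abs_cases s with ⟨h, -⟩ | ⟨h, -⟩
  · rw [h]
  · rw [h]
    exact ⟨fun hs => by simpa using hneg _ hs, hneg s⟩

lemma circularlySymmetric_of_conj_mem {Ω : Set ℂ} (hΩ : ∀ z ∈ Ω, conj z ∈ Ω)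
    (h : ∀ r θ θ' : ℝ, 0 < r → 0 ≤ θ' → θ' ≤ θ → θ ≤ Real.pi →
      (r : ℂ) * exp (θ * I) ∈ Ω → (r : ℂ) * exp (θ' * I) ∈ Ω) :
    CircularlySymmetric Ω := fun r θ θ' hr hle hπ hmem =>
  (ofReal_mul_exp_abs_mem_iff hΩ r θ').mp
    (h r |θ| |θ'| hr (abs_nonneg _) hle hπ ((ofReal_mul_exp_abs_mem_iff hΩ r θ).mpr hmem))

section ConformalMap

variable {f : ℂ → ℂ}

lemma conj_mem_image_of_conj_mem (hconj : ∀ z ∈ ball (0 : ℂ) 1, f (conj z) = conj (f z))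
    {S : Set ℂ} (hS : S ⊆ ball 0 1) (hSconj : ∀ z ∈ S, conj z ∈ S) {w : ℂ} (hw : w ∈ f '' S) :
    conj w ∈ f '' S := by
  obtain ⟨z, hz, rfl⟩ := hw
  exact ⟨conj z, hSconj z hz, hconj z (hS hz)⟩

lemma apply_ofReal_eq_ofReal_re (hconj : ∀ z ∈ ball (0 : ℂ) 1, f (conj z) = conj (f z))
    {x : ℝ} (hx : |x| < 1) : f x = (f x).re :=
  (conj_eq_iff_re.mp (by rw [← hconj x (by simpa using hx), conj_ofReal])).symm

lemma strictMonoOn_re_apply_ofReal (hf : DifferentiableOn ℂ f (ball 0 1))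
    (hinj : InjOn f (ball 0 1)) (hconj : ∀ z ∈ ball (0 : ℂ) 1, f (conj z) = conj (f z))
    (hf'0 : 0 < (deriv f 0).re) : StrictMonoOn (fun x : ℝ => (f x).re) (Ioo (-1) 1) := by
  have hmem : ∀ x ∈ Ioo (-1 : ℝ) 1, (x : ℂ) ∈ ball 0 1 := fun x hx => by
    simpa [abs_lt] using hx
  refine strictMonoOn_of_injOn_of_hasDerivAt_pos
    (continuous_re.comp_continuousOn (hf.continuousOn.comp continuous_ofReal.continuousOn hmem))
    (fun x hx y hy hxy => ?_) (by norm_num : (0 : ℝ) ∈ Ioo (-1) 1)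
    (hf.differentiableAt (isOpen_ball.mem_nhds (by simp))).hasDerivAt.real_of_complex hf'0
  have hfxy : f x = f y := by
    rw [apply_ofReal_eq_ofReal_re hconj (abs_lt.mpr hx),
      apply_ofReal_eq_ofReal_re hconj (abs_lt.mpr hy), hxy]
  exact_mod_cast hinj (hmem x hx) (hmem y hy) hfxy

lemma apply_ofReal_eq_norm (hf : DifferentiableOn ℂ f (ball 0 1))
    (hinj : InjOn f (ball 0 1)) (hconj : ∀ z ∈ ball (0 : ℂ) 1, f (conj z) = conj (f z))
    (hf0 : f 0 = 0) (hf'0 : 0 < (deriv f 0).re) {x : ℝ} (hx : x ∈ Ico 0 1) : f x = ‖f x‖ := by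
  have hre : 0 ≤ (f x).re := by
    rcases hx.1.eq_or_lt with rfl | hpos
    · simp [hf0]
    · simpa [hf0] using (strictMonoOn_re_apply_ofReal hf hinj hconj hf'0
        (by norm_num : (0 : ℝ) ∈ Ioo (-1) 1) ⟨by linarith, hx.2⟩ hpos).le
  rw [apply_ofReal_eq_ofReal_re hconj (abs_lt.mpr ⟨by linarith [hx.1], hx.2⟩), norm_real,
    Real.norm_of_nonneg hre]

lemma exists_angle_apply_eq_or_eq_conj (hconj : ∀ z ∈ ball (0 : ℂ) 1, f (conj z) = conj (f z))
    {z : ℂ} (hz : z ∈ ball 0 1) :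
    ∃ v ∈ Icc 0 Real.pi,
      f (‖z‖ * exp (v * I)) = f z ∨ f (‖z‖ * exp (v * I)) = conj (f z) := by
  obtain ⟨v, hv, h | h⟩ := exists_mem_Icc_pi_eq_or_conj_eq z
  · exact ⟨v, hv, Or.inl (by rw [h])⟩
  · exact ⟨v, hv, Or.inr (by rw [h, hconj z hz])⟩

lemma norm_apply_le_norm_apply_norm (hconj : ∀ z ∈ ball (0 : ℂ) 1, f (conj z) = conj (f z))
    (hdecr : ∀ r : ℝ, r ∈ Ioo (0 : ℝ) 1 →
      AntitoneOn (fun θ : ℝ => ‖f ((r : ℂ) * exp ((θ : ℂ) * I))‖) (Icc (0 : ℝ) Real.pi))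
    {z : ℂ} (hz : z ∈ ball 0 1) : ‖f z‖ ≤ ‖f ‖z‖‖ := by
  rcases eq_or_ne z 0 with rfl | hz0
  · simp
  obtain ⟨v, hv, h⟩ := exists_angle_apply_eq_or_eq_conj hconj hz
  have hnorm : ‖f (‖z‖ * exp (v * I))‖ = ‖f z‖ := by
    rcases h with h | h <;> simp [h]
  simpa [hnorm] using hdecr ‖z‖ ⟨norm_pos_iff.mpr hz0, mem_ball_zero_iff.mp hz⟩
    ⟨le_rfl, Real.pi_pos.le⟩ hv hv.1

lemma exists_ofReal_eq_norm_apply (hf : DifferentiableOn ℂ f (ball 0 1))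
    (hinj : InjOn f (ball 0 1)) (hconj : ∀ z ∈ ball (0 : ℂ) 1, f (conj z) = conj (f z))
    (hf0 : f 0 = 0) (hf'0 : 0 < (deriv f 0).re)
    (hdecr : ∀ r : ℝ, r ∈ Ioo (0 : ℝ) 1 →
      AntitoneOn (fun θ : ℝ => ‖f ((r : ℂ) * exp ((θ : ℂ) * I))‖) (Icc (0 : ℝ) Real.pi))
    {z : ℂ} (hz : z ∈ ball 0 1) : ∃ x ∈ Icc 0 ‖z‖, f x = ‖f z‖ := by
  have hIcc : Icc 0 ‖z‖ ⊆ Ico 0 1 := Icc_subset_Ico_right (mem_ball_zero_iff.mp hz)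
  have hcont : ContinuousOn (fun x : ℝ => ‖f x‖) (Icc 0 ‖z‖) :=
    continuous_norm.comp_continuousOn (hf.continuousOn.comp continuous_ofReal.continuousOn
      fun x hx => mem_ball_zero_iff.mpr (by
        rw [norm_real, Real.norm_of_nonneg (hIcc hx).1]; exact (hIcc hx).2))
  obtain ⟨x, hx, hfx⟩ := intermediate_value_Icc (norm_nonneg z) hcont
    ⟨by simp [hf0], norm_apply_le_norm_apply_norm hconj hdecr hz⟩
  exact ⟨x, hx, (apply_ofReal_eq_norm hf hinj hconj hf0 hf'0 (hIcc hx)).trans (congrArg _ hfx)⟩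

lemma isOpen_image_ball_of_injOn (hf : DifferentiableOn ℂ f (ball 0 1))
    (hinj : InjOn f (ball 0 1)) {ρ : ℝ} (hρ : ρ ≤ 1) : IsOpen (f '' ball 0 ρ) := by
  refine ((hf.analyticOnNhd isOpen_ball).is_constant_or_isOpen (convex_ball 0 1).isPreconnected
    ).resolve_left ?_ _ (ball_subset_ball hρ) isOpen_ball
  rintro ⟨w, hw⟩
  have hhalf : (1 / 2 : ℂ) ∈ ball 0 1 := by norm_num [mem_ball_zero_iff]
  have h0 : (0 : ℂ) ∈ ball 0 1 := mem_ball_self one_pos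
  have := hinj h0 hhalf ((hw 0 h0).trans (hw _ hhalf).symm)
  norm_num at this

lemma exists_mem_uIcc_ofReal_mul_exp_mem_image_sphere (hf : DifferentiableOn ℂ f (ball 0 1))
    (hinj : InjOn f (ball 0 1)) {ρ r a b : ℝ} (hρ : ρ < 1)
    (ha : (r : ℂ) * exp (a * I) ∈ f '' ball 0 ρ) (hb : (r : ℂ) * exp (b * I) ∉ f '' ball 0 ρ) :
    ∃ t ∈ uIcc a b, (r : ℂ) * exp (t * I) ∈ f '' sphere 0 ρ := by
  set c : ℝ → ℂ := fun t => r * exp (t * I)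
  obtain ⟨_, ⟨t, ht, rfl⟩, hfr⟩ :=
    (isPreconnected_uIcc.image c (by fun_prop)).inter_frontier_nonempty
      ⟨c a, mem_image_of_mem c left_mem_uIcc, ha⟩ ⟨c b, mem_image_of_mem c right_mem_uIcc, hb⟩
  exact ⟨t, ht, frontier_image_ball_subset_image_sphere
    (hf.continuousOn.mono (closedBall_subset_ball hρ)) (isOpen_image_ball_of_injOn hf hinj hρ.le)
    hfr⟩

lemma ofReal_mul_exp_mem_image_sphere_of_mem_Icc (hf : DifferentiableOn ℂ f (ball 0 1))
    (hconj : ∀ z ∈ ball (0 : ℂ) 1, f (conj z) = conj (f z))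
    (hdecr : ∀ r : ℝ, r ∈ Ioo (0 : ℝ) 1 →
      AntitoneOn (fun θ : ℝ => ‖f ((r : ℂ) * exp ((θ : ℂ) * I))‖) (Icc (0 : ℝ) Real.pi))
    {ρ r t₁ t₂ θ : ℝ} (hρ : ρ ∈ Ioo 0 1) (hr : 0 ≤ r) (ht₁ : 0 ≤ t₁) (h₁ : t₁ ≤ θ) (h₂ : θ ≤ t₂)
    (ht₂ : t₂ ≤ Real.pi) (hmem₁ : (r : ℂ) * exp (t₁ * I) ∈ f '' sphere 0 ρ)
    (hmem₂ : (r : ℂ) * exp (t₂ * I) ∈ f '' sphere 0 ρ) :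
    (r : ℂ) * exp (θ * I) ∈ f '' sphere 0 ρ := by
  have hsphere : sphere (0 : ℂ) ρ ⊆ ball 0 1 := sphere_subset_ball hρ.2
  set γ : ℝ → ℂ := fun v => f (ρ * exp (v * I))
  have hγ : ∀ v : ℝ, (ρ : ℂ) * exp (v * I) ∈ sphere 0 ρ := fun v =>
    mem_sphere_zero_iff_norm.mpr (norm_ofReal_mul_exp hρ.1.le v)
  have hlift : ∀ t : ℝ, (r : ℂ) * exp (t * I) ∈ f '' sphere 0 ρ →
      ∃ v ∈ Icc 0 Real.pi, ‖γ v‖ = r ∧ (γ v).re = r * Real.cos t := by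
    rintro t ⟨z, hz, hfz⟩
    obtain ⟨v, hv, h⟩ := exists_angle_apply_eq_or_eq_conj hconj (hsphere hz)
    rw [mem_sphere_zero_iff_norm.mp hz, hfz] at h
    refine ⟨v, hv, ?_⟩
    rcases h with h | h <;>
      simp only [γ, h, norm_conj, conj_re, norm_ofReal_mul_exp hr, re_ofReal_mul_exp, and_self]
  obtain ⟨v₁, hv₁, hn₁, hre₁⟩ := hlift t₁ hmem₁
  obtain ⟨v₂, hv₂, hn₂, hre₂⟩ := hlift t₂ hmem₂
  have hcont : ContinuousOn (fun v => (γ v).re) (uIcc v₁ v₂) :=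
    (continuous_re.comp (hf.continuousOn.comp_continuous (by fun_prop)
      fun v => hsphere (hγ v))).continuousOn
  have hcos : r * Real.cos θ ∈ uIcc (γ v₁).re (γ v₂).re := by
    rw [hre₁, hre₂]
    exact mem_uIcc_of_ge
      (mul_le_mul_of_nonneg_left (Real.cos_le_cos_of_nonneg_of_le_pi (ht₁.trans h₁) ht₂ h₂) hr)
      (mul_le_mul_of_nonneg_left (Real.cos_le_cos_of_nonneg_of_le_pi ht₁ (h₂.trans ht₂) h₁) hr)
  obtain ⟨v, hv, hre⟩ := intermediate_value_uIcc hcont hcos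
  have hn : ‖γ v‖ = r := hn₁ ▸ (hdecr ρ hρ).eq_of_mem_uIcc hv₁ hv₂ (hn₁.trans hn₂.symm) hv
  have hγv : γ v ∈ f '' sphere 0 ρ := ⟨_, hγ v, rfl⟩
  rcases eq_or_conj_eq_of_norm_eq_of_re_eq hn hre with h | h
  · exact h ▸ hγv
  · exact h ▸ conj_mem_image_of_conj_mem hconj hsphere (fun z hz => by simpa using hz) hγv

lemma ofReal_mul_exp_mem_image_ball_of_le (hf : DifferentiableOn ℂ f (ball 0 1))
    (hinj : InjOn f (ball 0 1)) (hconj : ∀ z ∈ ball (0 : ℂ) 1, f (conj z) = conj (f z))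
    (hf0 : f 0 = 0) (hf'0 : 0 < (deriv f 0).re)
    (hdecr : ∀ r : ℝ, r ∈ Ioo (0 : ℝ) 1 →
      AntitoneOn (fun θ : ℝ => ‖f ((r : ℂ) * exp ((θ : ℂ) * I))‖) (Icc (0 : ℝ) Real.pi))
    {r θ θ' : ℝ} (hr : 0 < r) (hθ' : 0 ≤ θ') (hle : θ' ≤ θ) (hθ : θ ≤ Real.pi)
    (hmem : (r : ℂ) * exp (θ * I) ∈ f '' ball 0 1) :
    (r : ℂ) * exp (θ' * I) ∈ f '' ball 0 1 := by
  obtain ⟨z₀, hz₀, hfz₀⟩ := hmem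
  obtain ⟨ρ, hz₀ρ, hρ1⟩ := exists_between (mem_ball_zero_iff.mp hz₀)
  have hρ : ρ ∈ Ioo 0 1 := ⟨(norm_nonneg z₀).trans_lt hz₀ρ, hρ1⟩
  obtain ⟨x, hx, hfx⟩ := exists_ofReal_eq_norm_apply hf hinj hconj hf0 hf'0 hdecr hz₀
  rw [hfz₀, norm_ofReal_mul_exp hr.le] at hfx
  have h0D : (r : ℂ) * exp ((0 : ℝ) * I) ∈ f '' ball 0 ρ :=
    ⟨x, mem_ball_zero_iff.mpr (by rw [norm_real, Real.norm_of_nonneg hx.1]; linarith [hx.2]),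
      by simpa using hfx⟩
  have hθD : (r : ℂ) * exp (θ * I) ∈ f '' ball 0 ρ := ⟨z₀, mem_ball_zero_iff.mpr hz₀ρ, hfz₀⟩
  by_cases hθ'D : (r : ℂ) * exp (θ' * I) ∈ f '' ball 0 ρ
  · exact image_mono (ball_subset_ball hρ.2.le) hθ'D
  obtain ⟨t₁, ht₁, h₁⟩ :=
    exists_mem_uIcc_ofReal_mul_exp_mem_image_sphere hf hinj hρ.2 h0D hθ'D
  obtain ⟨t₂, ht₂, h₂⟩ :=
    exists_mem_uIcc_ofReal_mul_exp_mem_image_sphere hf hinj hρ.2 hθD hθ'D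
  rw [uIcc_of_le hθ'] at ht₁
  rw [uIcc_of_ge hle] at ht₂
  exact image_mono (sphere_subset_ball hρ.2) (ofReal_mul_exp_mem_image_sphere_of_mem_Icc hf hconj
    hdecr hρ hr.le ht₁.1 ht₁.2 ht₂.1 (ht₂.2.trans hθ) h₁ h₂)

end ConformalMap

theorem symmetric_decreasing_implies_circsym_general
    (Ω : Set ℂ)
    (f : ℂ → ℂ) (hf : DifferentiableOn ℂ f (ball (0 : ℂ) 1))
    (hinj : InjOn f (ball (0 : ℂ) 1)) (himg : f '' ball (0 : ℂ) 1 = Ω)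
    (hf0 : f 0 = 0) (hf'0 : (deriv f 0).im = 0 ∧ 0 < (deriv f 0).re)
    (hconj : ∀ z ∈ ball (0 : ℂ) 1, f (starRingEnd ℂ z) = starRingEnd ℂ (f z))
    (hdecr : ∀ r : ℝ, r ∈ Ioo (0 : ℝ) 1 →
      AntitoneOn (fun θ : ℝ => ‖f ((r : ℂ) * Complex.exp ((θ : ℂ) * Complex.I))‖)
        (Icc (0 : ℝ) Real.pi)) :
    CircularlySymmetric Ω := by
  subst himg
  exact circularlySymmetric_of_conj_mem
    (fun _ => conj_mem_image_of_conj_mem hconj subset_rfl fun z hz => by simpa using hz)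
    fun _ _ _ hr hθ' hle hθ =>
      ofReal_mul_exp_mem_image_ball_of_le hf hinj hconj hf0 hf'0.2 hdecr hr hθ' hle hθ

/-- Theorem 3.1, (ii) ⇒ (i): if the normalized Riemann map `f` of a simply connected,
proper subdomain `Ω ∋ 0` commutes with conjugation and `θ ↦ |f(r e^{iθ})|` is
decreasing on `[0, π]` for each `r ∈ (0,1)`, then `Ω` is circularly symmetric. -/
theorem symmetric_decreasing_implies_circsym
    (Ω : Set ℂ) (hΩopen : IsOpen Ω) (hΩconn : IsConnected Ω)
    (hΩsc : SimplyConnectedSpace Ω) (hΩne : Ω ≠ univ) (hΩ0 : (0 : ℂ) ∈ Ω)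
    (f : ℂ → ℂ) (hf : DifferentiableOn ℂ f (ball (0 : ℂ) 1))
    (hinj : InjOn f (ball (0 : ℂ) 1)) (himg : f '' ball (0 : ℂ) 1 = Ω)
    (hf0 : f 0 = 0) (hf'0 : (deriv f 0).im = 0 ∧ 0 < (deriv f 0).re)
    (hconj : ∀ z ∈ ball (0 : ℂ) 1, f (starRingEnd ℂ z) = starRingEnd ℂ (f z))
    (hdecr : ∀ r : ℝ, r ∈ Ioo (0 : ℝ) 1 →
      AntitoneOn (fun θ : ℝ => ‖f ((r : ℂ) * Complex.exp ((θ : ℂ) * Complex.I))‖)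
        (Icc (0 : ℝ) Real.pi)) :
    CircularlySymmetric Ω :=
  symmetric_decreasing_implies_circsym_general Ω f hf hinj himg hf0 hf'0 hconj hdecr
end

section
/- Let Ω be a simply connected, proper subdomain of ℂ containing 0, and let f be a normalized conformal mapping of 𝔻 onto Ω. Suppose f(conj(z)) = conj(f(z)) for all z ∈ 𝔻 and, for each r ∈ (0,1), the map θ ↦ |f(r·e^{iθ})| is decreasing (antitone) on [0, π]. Then either there exists a real α > 0 such that f(z) = α·z for all z ∈ 𝔻, or for each r ∈ (0,1) the map θ ↦ |f(r·e^{iθ})| is strictly decreasing on [0, π]. -/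
open Complex Metric Set Filter Function
open scoped ComplexConjugate Topology

/-! If `θ ↦ |f(r e^{iθ})|` is decreasing but not strictly, it is constant on some arc `[a, b]`.
By the symmetry `f(z̄) = conj (f z)`, `|f(r e^{iθ})|² = f(r e^{iθ}) f(r e^{-iθ})` is the
restriction to `ℝ` of a function holomorphic on a horizontal strip, so the identity theorem
makes `|f|` constant on the whole circle `|z| = r`. Then `f(z) / z`, zero-free by injectivity,
has constant modulus on that circle; by the maximum and minimum modulus principles it is
constant, so `f(z) = f'(0) z`. -/

lemma AntitoneOn.exists_lt_forall_Icc_eq_of_not_strictAntiOn {α β : Type*} [Preorder α]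
    [PartialOrder β] {F : α → β} {s : Set α} [s.OrdConnected] (hF : AntitoneOn F s)
    (hs : ¬ StrictAntiOn F s) : ∃ a b, a < b ∧ ∀ θ ∈ Icc a b, F θ = F a := by
  simp only [StrictAntiOn, not_forall] at hs
  obtain ⟨a, ha, b, hb, hab, hnlt⟩ := hs
  have hFab : F b = F a := (hF ha hb hab.le).lt_or_eq.resolve_left hnlt
  refine ⟨a, b, hab, fun θ hθ => ?_⟩
  have hθs : θ ∈ s := Set.OrdConnected.out ‹_› ha hb hθ
  exact le_antisymm (hF ha hθs hθ.1) (hFab ▸ hF hθs hb hθ.2)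

lemma AnalyticOnNhd.eqOn_of_eqOn_Icc {H G : ℂ → ℂ} {S : Set ℂ} (hH : AnalyticOnNhd ℂ H S)
    (hG : AnalyticOnNhd ℂ G S) (hS : IsPreconnected S) {a b : ℝ} (hab : a < b)
    (ha : (a : ℂ) ∈ S) (heq : ∀ θ ∈ Icc a b, H θ = G θ) : EqOn H G S := by
  refine hH.eqOn_of_preconnected_of_frequently_eq hG hS ha ?_
  have hofReal : Tendsto ((↑) : ℝ → ℂ) (𝓝[>] a) (𝓝[≠] (a : ℂ)) :=
    continuous_ofReal.continuousWithinAt.tendsto_nhdsWithin fun x hx => by simpa using hx.ne'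
  refine hofReal.frequently (Eventually.frequently ?_)
  filter_upwards [Ico_mem_nhdsGT hab] with θ hθ using heq θ (Ico_subset_Icc_self hθ)

lemma mapsTo_ofReal_mul_exp_mul_I_ball {r : ℝ} (hr : 0 < r) :
    MapsTo (fun z : ℂ => (r : ℂ) * exp (z * I)) (im ⁻¹' Ioi (Real.log r)) (ball 0 1) := by
  intro z hz
  have hnorm : ‖(r : ℂ) * exp (z * I)‖ = Real.exp (Real.log r - z.im) := by
    rw [norm_mul, norm_exp, Real.exp_sub, Real.exp_log hr, norm_real, Real.norm_of_nonneg hr.le]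
    simp [div_eq_mul_inv, Real.exp_neg]
  rw [mem_ball_zero_iff, hnorm, Real.exp_lt_one_iff, sub_neg]
  exact hz

lemma norm_eq_on_sphere_of_norm_eq_on_arc {f : ℂ → ℂ} (hf : DifferentiableOn ℂ f (ball 0 1))
    (hconj : ∀ z ∈ ball (0 : ℂ) 1, f (conj z) = conj (f z)) {r a b c : ℝ} (hr : r ∈ Ioo 0 1)
    (hab : a < b) (hc : ∀ θ ∈ Icc a b, ‖f (r * exp (θ * I))‖ = c) :
    ∀ w ∈ sphere (0 : ℂ) r, ‖f w‖ = c := by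
  set S : Set ℂ := im ⁻¹' Ioo (Real.log r) (-Real.log r)
  set g : ℂ → ℂ := fun z => f (r * exp (z * I))
  have hmaps := mapsTo_ofReal_mul_exp_mul_I_ball hr.1
  have hg : DifferentiableOn ℂ g (im ⁻¹' Ioi (Real.log r)) :=
    hf.comp (by fun_prop) hmaps
  have hSopen : IsOpen S := isOpen_Ioo.preimage continuous_im
  have hSconv : Convex ℝ S := (convex_Ioo _ _).linear_preimage imLm
  have hH : AnalyticOnNhd ℂ (fun z => g z * g (-z)) S := by
    refine (analyticOnNhd_iff_differentiableOn hSopen).2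
      ((hg.mono fun z hz => hz.1).mul (hg.comp (differentiableOn_neg _) fun z hz => ?_))
    simpa [lt_neg] using hz.2
  have hlogr : Real.log r < 0 := Real.log_neg hr.1 hr.2
  have hrealS : ∀ θ : ℝ, (θ : ℂ) ∈ S := fun θ => by
    simp only [S, mem_preimage, ofReal_im, mem_Ioo]; constructor <;> linarith
  have hreal : ∀ θ : ℝ, g θ * g (-θ) = ((‖g θ‖ ^ 2 : ℝ) : ℂ) := by
    intro θ
    have hθ : (r : ℂ) * exp (-(θ : ℂ) * I) = conj (r * exp (θ * I)) := by
      rw [map_mul, ← exp_conj]; simp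
    simp only [g]
    rw [hθ, hconj _ (hmaps (by simpa using hlogr)), mul_conj, normSq_eq_norm_sq]
  have hEq := hH.eqOn_of_eqOn_Icc (analyticOnNhd_const (v := ((c ^ 2 : ℝ) : ℂ)))
    hSconv.isPreconnected hab (hrealS a) fun θ hθ => by rw [hreal, hc θ hθ]
  intro w hw
  have hw' : (r : ℂ) * exp (arg w * I) = w := by
    rw [← mem_sphere_zero_iff_norm.1 hw]; exact norm_mul_exp_arg_mul_I w
  have hsq : g (arg w) * g (-(arg w : ℂ)) = ((c ^ 2 : ℝ) : ℂ) := hEq (hrealS (arg w))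
  rw [hreal, ofReal_inj, show g (arg w) = f w from congrArg f hw'] at hsq
  have hc0 : 0 ≤ c := hc a ⟨le_rfl, hab.le⟩ ▸ norm_nonneg _
  exact (sq_eq_sq₀ (norm_nonneg _) hc0).1 hsq

lemma dslope_ne_zero_of_injOn {f : ℂ → ℂ} {U : Set ℂ} {z₀ z : ℂ} (hinj : InjOn f U)
    (hz₀ : z₀ ∈ U) (hd : deriv f z₀ ≠ 0) (hz : z ∈ U) : dslope f z₀ z ≠ 0 := by
  rcases eq_or_ne z z₀ with rfl | hne
  · rwa [dslope_same]
  · rw [dslope_of_ne f hne, slope_def_field]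
    exact div_ne_zero (sub_ne_zero.2 fun h => hne (hinj hz hz₀ h)) (sub_ne_zero.2 hne)

lemma Complex.norm_eq_of_forall_mem_frontier_norm_eq {h : ℂ → ℂ} {U : Set ℂ} (hU : Bornology.IsBounded U)
    (hd : DiffContOnCl ℂ h U) (hne : ∀ z ∈ closure U, h z ≠ 0) {M : ℝ}
    (hM : ∀ w ∈ frontier U, ‖h w‖ = M) {z : ℂ} (hz : z ∈ closure U) : ‖h z‖ = M := by
  have hle : ‖h z‖ ≤ M := norm_le_of_forall_mem_frontier_norm_le hU hd (fun w hw => (hM w hw).le) hz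
  have hinv : ‖(h z)⁻¹‖ ≤ M⁻¹ := norm_le_of_forall_mem_frontier_norm_le hU (hd.inv hne)
    (fun w hw => by rw [Pi.inv_apply, norm_inv, hM w hw]) hz
  have hpos : 0 < ‖h z‖ := norm_pos_iff.2 (hne z hz)
  rw [norm_inv, inv_le_inv₀ hpos (hpos.trans_le hle)] at hinv
  exact hle.antisymm hinv

lemma eqOn_deriv_mul_of_norm_eq_on_sphere {f : ℂ → ℂ} {U : Set ℂ} (hU : IsOpen U)
    (hUc : IsPreconnected U) (hf : DifferentiableOn ℂ f U) (hinj : InjOn f U) (hf0 : f 0 = 0)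
    (hd0 : deriv f 0 ≠ 0) {r c : ℝ} (hr : 0 < r) (hrU : closedBall 0 r ⊆ U)
    (hc : ∀ w ∈ sphere (0 : ℂ) r, ‖f w‖ = c) : EqOn f (fun z => deriv f 0 * z) U := by
  have h0U : (0 : ℂ) ∈ U := hrU (mem_closedBall_self hr.le)
  have hh : DifferentiableOn ℂ (dslope f 0) U := (differentiableOn_dslope (hU.mem_nhds h0U)).2 hf
  have hsphere : ∀ w ∈ sphere (0 : ℂ) r, ‖dslope f 0 w‖ = c / r := by
    intro w hw
    rw [dslope_of_ne f (ne_of_mem_sphere hw hr.ne'), slope_def_field, hf0, sub_zero,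
      sub_zero, norm_div, hc w hw, mem_sphere_zero_iff_norm.1 hw]
  have hnorm : ∀ z ∈ closedBall (0 : ℂ) r, ‖dslope f 0 z‖ = c / r := by
    intro z hz
    rw [← closure_ball 0 hr.ne'] at hz
    refine norm_eq_of_forall_mem_frontier_norm_eq isBounded_ball (hh.diffContOnCl_ball hrU)
      (fun w hw => dslope_ne_zero_of_injOn hinj h0U hd0 (hrU ?_)) ?_ hz
    · rwa [closure_ball 0 hr.ne'] at hw
    · rwa [frontier_ball 0 hr.ne']
  have hconst : EqOn (dslope f 0) (const ℂ (dslope f 0 0)) (ball 0 r) :=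
    eqOn_of_isPreconnected_of_isMaxOn_norm (convex_ball 0 r).isPreconnected isOpen_ball
      (hh.mono (ball_subset_closedBall.trans hrU)) (mem_ball_self hr) <| isMaxOn_iff.2 fun z hz =>
        (hnorm z (ball_subset_closedBall hz)).trans_le (hnorm 0 (mem_closedBall_self hr.le)).ge
  have hlin : EqOn f (fun z => deriv f 0 * z) (ball 0 r) := fun z hz => by
    have hsmul := sub_smul_dslope f 0 z
    rw [show dslope f 0 z = deriv f 0 from (hconst hz).trans (dslope_same f 0), hf0,
      sub_zero, sub_zero, smul_eq_mul] at hsmul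
    rw [← hsmul, mul_comm]
  exact ((analyticOnNhd_iff_differentiableOn hU).2 hf).eqOn_of_preconnected_of_eventuallyEq
    (analyticOnNhd_const.mul analyticOnNhd_id) hUc h0U
    (hlin.eventuallyEq_of_mem (ball_mem_nhds 0 hr))

theorem strict_decrease_dichotomy_general
    (f : ℂ → ℂ) (hf : DifferentiableOn ℂ f (ball (0 : ℂ) 1))
    (hinj : InjOn f (ball (0 : ℂ) 1))
    (hf0 : f 0 = 0) (hf'0 : (deriv f 0).im = 0 ∧ 0 < (deriv f 0).re)
    (hconj : ∀ z ∈ ball (0 : ℂ) 1, f (starRingEnd ℂ z) = starRingEnd ℂ (f z))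
    (hdecr : ∀ r : ℝ, r ∈ Ioo (0 : ℝ) 1 →
      AntitoneOn (fun θ : ℝ => ‖f ((r : ℂ) * Complex.exp ((θ : ℂ) * Complex.I))‖)
        (Icc (0 : ℝ) Real.pi)) :
    (∃ α : ℝ, 0 < α ∧ ∀ z ∈ ball (0 : ℂ) 1, f z = (α : ℂ) * z) ∨
    ∀ r : ℝ, r ∈ Ioo (0 : ℝ) 1 →
      StrictAntiOn (fun θ : ℝ => ‖f ((r : ℂ) * Complex.exp ((θ : ℂ) * Complex.I))‖)
        (Icc (0 : ℝ) Real.pi) := by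
  refine or_iff_not_imp_right.2 fun hnot => ?_
  push Not at hnot
  obtain ⟨r, hr, hnot⟩ := hnot
  obtain ⟨a, b, hab, harc⟩ := (hdecr r hr).exists_lt_forall_Icc_eq_of_not_strictAntiOn hnot
  have hsphere := norm_eq_on_sphere_of_norm_eq_on_arc hf hconj hr hab harc
  have hd0 : deriv f 0 ≠ 0 := fun h => by simp [h] at hf'0
  have hlin := eqOn_deriv_mul_of_norm_eq_on_sphere isOpen_ball (convex_ball 0 1).isPreconnected
    hf hinj hf0 hd0 hr.1 (closedBall_subset_ball hr.2) hsphere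
  refine ⟨(deriv f 0).re, hf'0.2, fun z hz => ?_⟩
  rw [hlin hz, ← re_add_im (deriv f 0), hf'0.1]
  simp

/-- Lemma 3.4: if the normalized Riemann map `f` of a simply connected, proper
subdomain `Ω ∋ 0` commutes with conjugation and `θ ↦ |f(r e^{iθ})|` is decreasing
on `[0, π]` for each `r ∈ (0,1)`, then either `f(z) ≡ αz` with `α > 0`, or, for each
`r ∈ (0,1)`, the map `θ ↦ |f(r e^{iθ})|` is strictly decreasing on `[0, π]`. -/
theorem strict_decrease_dichotomy
    (Ω : Set ℂ) (hΩopen : IsOpen Ω) (hΩconn : IsConnected Ω)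
    (hΩsc : SimplyConnectedSpace Ω) (hΩne : Ω ≠ univ) (hΩ0 : (0 : ℂ) ∈ Ω)
    (f : ℂ → ℂ) (hf : DifferentiableOn ℂ f (ball (0 : ℂ) 1))
    (hinj : InjOn f (ball (0 : ℂ) 1)) (himg : f '' ball (0 : ℂ) 1 = Ω)
    (hf0 : f 0 = 0) (hf'0 : (deriv f 0).im = 0 ∧ 0 < (deriv f 0).re)
    (hconj : ∀ z ∈ ball (0 : ℂ) 1, f (starRingEnd ℂ z) = starRingEnd ℂ (f z))
    (hdecr : ∀ r : ℝ, r ∈ Ioo (0 : ℝ) 1 →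
      AntitoneOn (fun θ : ℝ => ‖f ((r : ℂ) * Complex.exp ((θ : ℂ) * Complex.I))‖)
        (Icc (0 : ℝ) Real.pi)) :
    (∃ α : ℝ, 0 < α ∧ ∀ z ∈ ball (0 : ℂ) 1, f z = (α : ℂ) * z) ∨
    ∀ r : ℝ, r ∈ Ioo (0 : ℝ) 1 →
      StrictAntiOn (fun θ : ℝ => ‖f ((r : ℂ) * Complex.exp ((θ : ℂ) * Complex.I))‖)
        (Icc (0 : ℝ) Real.pi) :=
  strict_decrease_dichotomy_general f hf hinj hf0 hf'0 hconj hdecr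
end

section
/- Let a, b be positive real numbers with 3a + 5b ≤ 1 and a·b + 4b ≤ a, and define f(z) = z + a·z³ − b·z⁵. Then f is injective on the open unit disk 𝔻, and the image Ω = f(𝔻) is a bi-circularly symmetric domain. -/
/-!
Injectivity: `f z - f w = (z - w) (1 + a (z² + zw + w²) - b (z⁴ + ⋯ + w⁴))`, and for `|z|, |w| < 1`
the second factor differs from `1` by less than `3a + 5b ≤ 1`. The image of the disk is then open
by the open mapping theorem; the symmetries under `z ↦ -z` and `z ↦ z̄` are inherited from `f`.

For the angular monotonicity, `|f(ρ e^{it})|² = G(ρ, cos 2t)` with `G = quinticPolarNormSq a b`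
strictly increasing in `ρ ∈ [0, 1]` (because `3a + 5b ≤ 1`) and increasing in `c = cos 2t`
(because `ab + 4b ≤ a`). Moreover `f` maps each closed quadrant of the disk into the same
quadrant. If `f(z₀) = r e^{iθ}` with `z₀ = ρ₀ e^{it₀}`, then `t₀ ∈ [0, π/2]`, and for every
`t ∈ [0, t₀]` there is a unique `ρ(t) ∈ [0, ρ₀]` with `G(ρ(t), cos 2t) = r²`, depending
continuously on `t`. Along the arc `t ↦ f(ρ(t) e^{it})` of the circle `|w| = r` the argument
runs continuously from `0` to `θ`, so it takes the value `θ'`.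
-/

open Complex Metric Set

/-- A plane domain `Ω` is bi-circularly symmetric if its intersection with each
circle centred at the origin is empty, the whole circle, or the union of two subarcs
of equal length centred on the positive and negative real axes; equivalently,
`Ω = −Ω`, `Ω` is invariant under conjugation, and for every `r > 0` and angles
`0 ≤ θ' ≤ θ ≤ π/2`, if `r·e^{iθ} ∈ Ω` then `r·e^{iθ'} ∈ Ω`. -/
def BiCircularlySymmetric (Ω : Set ℂ) : Prop :=
  (∀ z ∈ Ω, -z ∈ Ω) ∧ (∀ z ∈ Ω, starRingEnd ℂ z ∈ Ω) ∧
  ∀ r θ θ' : ℝ, 0 < r → 0 ≤ θ' → θ' ≤ θ → θ ≤ Real.pi / 2 →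
    (r : ℂ) * Complex.exp ((θ : ℂ) * Complex.I) ∈ Ω →
    (r : ℂ) * Complex.exp ((θ' : ℂ) * Complex.I) ∈ Ω

open Real

theorem AnalyticOnNhd.isOpen_image_of_injOn {g : ℂ → ℂ} {U : Set ℂ} (hg : AnalyticOnNhd ℂ g U)
    (hU : IsPreconnected U) (hUo : IsOpen U) (hinj : InjOn g U) : IsOpen (g '' U) := by
  refine (hg.is_constant_or_isOpen hU).elim (fun ⟨w, hw⟩ => ?_) (· U subset_rfl hUo)
  have hsub : U.Subsingleton := fun x hx y hy => hinj hx hy ((hw x hx).trans (hw y hy).symm)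
  obtain rfl | ⟨x, rfl⟩ := hsub.eq_empty_or_singleton
  · simp
  · exact absurd hUo (not_isOpen_singleton x)

theorem norm_geom_sum₂_le {R : Type*} [NormedRing R] [NormOneClass R] {x y : R} {m : ℝ}
    (hx : ‖x‖ ≤ m) (hy : ‖y‖ ≤ m) (n : ℕ) :
    ‖∑ i ∈ Finset.range n, x ^ i * y ^ (n - 1 - i)‖ ≤ n * m ^ (n - 1) := by
  have hm : 0 ≤ m := (norm_nonneg x).trans hx
  calc ‖∑ i ∈ Finset.range n, x ^ i * y ^ (n - 1 - i)‖
      ≤ ∑ i ∈ Finset.range n, ‖x ^ i * y ^ (n - 1 - i)‖ := norm_sum_le _ _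
    _ ≤ ∑ i ∈ Finset.range n, m ^ (n - 1) := by
        refine Finset.sum_le_sum fun i hi => ?_
        have hi : i + (n - 1 - i) = n - 1 := by have := Finset.mem_range.1 hi; omega
        calc ‖x ^ i * y ^ (n - 1 - i)‖ ≤ ‖x‖ ^ i * ‖y‖ ^ (n - 1 - i) :=
              (norm_mul_le _ _).trans (mul_le_mul (norm_pow_le _ _) (norm_pow_le _ _)
                (norm_nonneg _) (by positivity))
          _ ≤ m ^ i * m ^ (n - 1 - i) := by gcongr
          _ = m ^ (n - 1) := by rw [← pow_add, hi]
    _ = n * m ^ (n - 1) := by simp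

theorem mem_slitPlane_of_re_nonneg {z : ℂ} (hre : 0 ≤ z.re) (hz : z ≠ 0) : z ∈ slitPlane := by
  rw [mem_slitPlane_iff]
  rcases hre.lt_or_eq with hre | hre
  · exact .inl hre
  · exact .inr fun him => hz (Complex.ext hre.symm him)

theorem continuousOn_of_strictMonoOn_of_eq {X : Type*} [TopologicalSpace X] {s : Set X}
    {I : Set ℝ} (hI : I.OrdConnected) {F : X → ℝ → ℝ} {g : X → ℝ} {c : ℝ}
    (hF : ∀ y ∈ I, ContinuousOn (F · y) s) (hmono : ∀ x ∈ s, StrictMonoOn (F x) I)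
    (hgI : ∀ x ∈ s, g x ∈ I) (hg : ∀ x ∈ s, F x (g x) = c) : ContinuousOn g s := by
  intro x hx
  refine tendsto_order.2 ⟨fun u hu => ?_, fun v hv => ?_⟩
  · by_cases huI : u ∈ I
    · have hlt : F x u < c := hg x hx ▸ hmono x hx huI (hgI x hx) hu
      filter_upwards [(hF u huI x hx).eventually_lt_const hlt, self_mem_nhdsWithin]
        with y hy hys
      by_contra! hle
      exact ((hmono y hys).monotoneOn (hgI y hys) huI hle).not_gt (hg y hys ▸ hy)
    · filter_upwards [self_mem_nhdsWithin] with y hys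
      by_contra! hle
      exact huI (hI.out (hgI y hys) (hgI x hx) ⟨hle, hu.le⟩)
  · by_cases hvI : v ∈ I
    · have hlt : c < F x v := hg x hx ▸ hmono x hx (hgI x hx) hvI hv
      filter_upwards [(hF v hvI x hx).eventually_const_lt hlt, self_mem_nhdsWithin]
        with y hy hys
      by_contra! hle
      exact ((hmono y hys).monotoneOn hvI (hgI y hys) hle).not_gt (hg y hys ▸ hy)
    · filter_upwards [self_mem_nhdsWithin] with y hys
      by_contra! hle
      exact hvI (hI.out (hgI x hx) (hgI y hys) ⟨hv.le, hle⟩)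

theorem exists_continuousOn_eq_of_strictMonoOn {X : Type*} [TopologicalSpace X] {s : Set X}
    {F : X → ℝ → ℝ} {u v c : ℝ} (huv : u ≤ v) (hFx : ∀ y ∈ Icc u v, ContinuousOn (F · y) s)
    (hFy : ∀ x ∈ s, ContinuousOn (F x) (Icc u v)) (hmono : ∀ x ∈ s, StrictMonoOn (F x) (Icc u v))
    (hc : ∀ x ∈ s, c ∈ Icc (F x u) (F x v)) :
    ∃ g : X → ℝ, ContinuousOn g s ∧ ∀ x ∈ s, g x ∈ Icc u v ∧ F x (g x) = c := by
  have : ∀ x ∈ s, ∃ y ∈ Icc u v, F x y = c :=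
    fun x hx => intermediate_value_Icc huv (hFy x hx) (hc x hx)
  choose! g hgI hg using this
  exact ⟨g, continuousOn_of_strictMonoOn_of_eq ordConnected_Icc hFx hmono hgI hg,
    fun x hx => ⟨hgI x hx, hg x hx⟩⟩

theorem ContinuousOn.exists_eq_mul_exp_of_norm_eq {w : ℝ → ℂ} {p q r θ : ℝ} (hpq : p ≤ q)
    (hw : ContinuousOn w (Icc p q)) (hnorm : ∀ t ∈ Icc p q, ‖w t‖ = r)
    (hslit : ∀ t ∈ Icc p q, w t ∈ slitPlane) (hθ : θ ∈ Icc (arg (w p)) (arg (w q))) :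
    ∃ t ∈ Icc p q, w t = r * exp (θ * I) := by
  have harg : ContinuousOn (arg ∘ w) (Icc p q) := fun t ht =>
    (continuousAt_arg (hslit t ht)).comp_continuousWithinAt (hw t ht)
  obtain ⟨t, ht, htθ⟩ := intermediate_value_Icc hpq harg hθ
  refine ⟨t, ht, ?_⟩
  rw [← hnorm t ht, ← htθ]
  exact (norm_mul_exp_arg_mul_I (w t)).symm

theorem three_mul_add_five_mul_sq_lt_one {a b s : ℝ} (hb : 0 ≤ b) (hab : 3 * a + 5 * b ≤ 1)
    (hs₀ : 0 ≤ s) (hs₁ : s < 1) : 3 * a * s + 5 * b * s ^ 2 < 1 := by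
  nlinarith [mul_nonneg hb (mul_nonneg hs₀ (sub_nonneg.2 hs₁.le)),
    mul_nonneg (sub_nonneg.2 hab) hs₀]

theorem strictMonoOn_real_quintic {a a' b : ℝ} (ha' : |a'| ≤ a) (hb : 0 ≤ b)
    (hab : 3 * a + 5 * b ≤ 1) :
    StrictMonoOn (fun ρ : ℝ => ρ + a' * ρ ^ 3 - b * ρ ^ 5) (Icc 0 1) := by
  have hderiv (ρ : ℝ) : HasDerivAt (fun ρ : ℝ => ρ + a' * ρ ^ 3 - b * ρ ^ 5)
      (1 + 3 * a' * ρ ^ 2 - 5 * b * ρ ^ 4) ρ := by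
    refine (((hasDerivAt_id' ρ).add ((hasDerivAt_pow 3 ρ).const_mul a')).sub
      ((hasDerivAt_pow 5 ρ).const_mul b)).congr_deriv ?_
    norm_num
    ring
  refine strictMonoOn_of_deriv_pos (convex_Icc 0 1) (by fun_prop) fun ρ hρ => ?_
  rw [interior_Icc] at hρ
  rw [(hderiv ρ).deriv]
  have hs := three_mul_add_five_mul_sq_lt_one hb hab (sq_nonneg ρ) (by nlinarith [hρ.1, hρ.2])
  nlinarith [neg_abs_le a', mul_le_mul_of_nonneg_right (neg_le_neg ha') (sq_nonneg ρ)]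

def quintic (a b : ℝ) (z : ℂ) : ℂ := z + a * z ^ 3 - b * z ^ 5

section Quintic

variable {a b : ℝ}

theorem quintic_neg (z : ℂ) : quintic a b (-z) = -quintic a b z := by
  simp only [quintic]
  ring

theorem quintic_conj (z : ℂ) : quintic a b (starRingEnd ℂ z) = starRingEnd ℂ (quintic a b z) := by
  simp [quintic]

theorem quintic_sub_quintic (z w : ℂ) :
    quintic a b z - quintic a b w =
      (1 + (a * ∑ i ∈ Finset.range 3, z ^ i * w ^ (3 - 1 - i)
        - b * ∑ i ∈ Finset.range 5, z ^ i * w ^ (5 - 1 - i))) * (z - w) := by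
  rw [add_sub_assoc', sub_mul, add_mul, mul_assoc, mul_assoc, geom_sum₂_mul, geom_sum₂_mul,
    quintic, quintic]
  ring

theorem norm_mul_geom_sum₂_sub_lt_one (ha : 0 ≤ a) (hb : 0 ≤ b) (hab : 3 * a + 5 * b ≤ 1)
    {z w : ℂ} (hz : z ∈ ball (0 : ℂ) 1) (hw : w ∈ ball (0 : ℂ) 1) :
    ‖a * ∑ i ∈ Finset.range 3, z ^ i * w ^ (3 - 1 - i)
      - b * ∑ i ∈ Finset.range 5, z ^ i * w ^ (5 - 1 - i)‖ < 1 := by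
  set m := max ‖z‖ ‖w‖
  have hm₁ : m < 1 := max_lt (mem_ball_zero_iff.1 hz) (mem_ball_zero_iff.1 hw)
  have hm₀ : 0 ≤ m := (norm_nonneg z).trans (le_max_left _ _)
  have hsum (n : ℕ) := norm_geom_sum₂_le (le_max_left ‖z‖ ‖w‖) (le_max_right ‖z‖ ‖w‖) n
  calc _ ≤ a * (3 * m ^ 2) + b * (5 * m ^ 4) := by
        refine (norm_sub_le _ _).trans (add_le_add ?_ ?_)
        · rw [norm_mul, norm_real, Real.norm_of_nonneg ha]
          exact mul_le_mul_of_nonneg_left (by simpa using hsum 3) ha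
        · rw [norm_mul, norm_real, Real.norm_of_nonneg hb]
          exact mul_le_mul_of_nonneg_left (by simpa using hsum 5) hb
    _ = 3 * a * m ^ 2 + 5 * b * (m ^ 2) ^ 2 := by ring
    _ < 1 := three_mul_add_five_mul_sq_lt_one hb hab (by positivity) (by nlinarith)

theorem quintic_injOn (ha : 0 ≤ a) (hb : 0 ≤ b) (hab : 3 * a + 5 * b ≤ 1) :
    InjOn (quintic a b) (ball 0 1) := by
  intro z hz w hw hzw
  have hslope := norm_mul_geom_sum₂_sub_lt_one ha hb hab hz hw
  have hfactor := quintic_sub_quintic (a := a) (b := b) z w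
  rw [hzw, sub_self, eq_comm, mul_eq_zero] at hfactor
  refine sub_eq_zero.1 (hfactor.resolve_left fun h => ?_)
  rw [eq_neg_of_add_eq_zero_right h, norm_neg, norm_one] at hslope
  exact hslope.false

theorem quintic_re (z : ℂ) : (quintic a b z).re = z.re * (1 + a * (z.re ^ 2 - 3 * z.im ^ 2)
    - b * (z.re ^ 4 - 10 * z.re ^ 2 * z.im ^ 2 + 5 * z.im ^ 4)) := by
  simp [quintic, pow_succ, mul_re, mul_im]
  ring

theorem quintic_im (z : ℂ) : (quintic a b z).im = z.im * (1 + a * (3 * z.re ^ 2 - z.im ^ 2)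
    - b * (5 * z.re ^ 4 - 10 * z.re ^ 2 * z.im ^ 2 + z.im ^ 4)) := by
  simp [quintic, pow_succ, mul_re, mul_im]
  ring

theorem normSq_quintic (z : ℂ) : normSq (quintic a b z) =
    normSq z + a ^ 2 * normSq z ^ 3 + b ^ 2 * normSq z ^ 5 + 2 * b * normSq z ^ 3
      + 2 * a * normSq z * (1 - b * normSq z ^ 2) * (z ^ 2).re
      - 4 * b * normSq z * (z ^ 2).re ^ 2 := by
  simp only [normSq_apply, quintic_re, quintic_im, sq, mul_re]
  ring

theorem re_sq_add_im_sq_lt_one {z : ℂ} (hz : z ∈ ball (0 : ℂ) 1) : z.re ^ 2 + z.im ^ 2 < 1 := by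
  have h := Complex.sq_norm z
  rw [normSq_apply] at h
  nlinarith [norm_nonneg z, mem_ball_zero_iff.1 hz]

theorem quintic_re_nonneg_iff (ha : 0 ≤ a) (hb : 0 ≤ b) (hab : 3 * a + 5 * b ≤ 1) {z : ℂ}
    (hz : z ∈ ball (0 : ℂ) 1) : 0 ≤ (quintic a b z).re ↔ 0 ≤ z.re := by
  have hs := three_mul_add_five_mul_sq_lt_one hb hab (by positivity) (re_sq_add_im_sq_lt_one hz)
  rw [quintic_re]
  refine mul_nonneg_iff_of_pos_right ?_
  nlinarith [mul_nonneg ha (sq_nonneg z.re), mul_nonneg hb (sq_nonneg (z.re ^ 2)),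
    mul_nonneg hb (mul_nonneg (sq_nonneg z.re) (sq_nonneg z.im))]

theorem quintic_im_nonneg_iff (ha : 0 ≤ a) (hb : 0 ≤ b) (hab : 3 * a + 5 * b ≤ 1) {z : ℂ}
    (hz : z ∈ ball (0 : ℂ) 1) : 0 ≤ (quintic a b z).im ↔ 0 ≤ z.im := by
  have hs := three_mul_add_five_mul_sq_lt_one hb hab (by positivity) (re_sq_add_im_sq_lt_one hz)
  rw [quintic_im]
  refine mul_nonneg_iff_of_pos_right ?_
  nlinarith [mul_nonneg ha (sq_nonneg z.re), mul_nonneg ha (sq_nonneg z.im),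
    mul_nonneg hb (sq_nonneg (z.im ^ 2)),
    mul_nonneg hb (mul_nonneg (sq_nonneg z.re) (sq_nonneg z.im))]

theorem arg_mem_Icc_of_quintic_eq_mul_exp (ha : 0 ≤ a) (hb : 0 ≤ b) (hab : 3 * a + 5 * b ≤ 1)
    {z : ℂ} (hz : z ∈ ball (0 : ℂ) 1) {r θ : ℝ} (hr : 0 < r) (hθ : θ ∈ Icc 0 (π / 2))
    (h : quintic a b z = r * exp (θ * I)) : arg z ∈ Icc 0 (π / 2) := by
  have hre : 0 ≤ z.re := (quintic_re_nonneg_iff ha hb hab hz).1 <| by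
    rw [h, re_ofReal_mul, exp_ofReal_mul_I_re]
    exact mul_nonneg hr.le (Real.cos_nonneg_of_mem_Icc ⟨by linarith [pi_pos, hθ.1], hθ.2⟩)
  have him : 0 ≤ z.im := (quintic_im_nonneg_iff ha hb hab hz).1 <| by
    rw [h, im_ofReal_mul, exp_ofReal_mul_I_im]
    exact mul_nonneg hr.le (Real.sin_nonneg_of_nonneg_of_le_pi hθ.1 (by linarith [pi_pos, hθ.2]))
  exact ⟨arg_nonneg_iff.2 him, arg_le_pi_div_two_iff.2 (Or.inl hre)⟩

variable (a b) in
noncomputable def quinticPolarNormSq (ρ c : ℝ) : ℝ :=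
  (1 + c) / 2 * (ρ + a * ρ ^ 3 - b * ρ ^ 5) ^ 2 + (1 - c) / 2 * (ρ - a * ρ ^ 3 - b * ρ ^ 5) ^ 2
    + 4 * b * ρ ^ 6 * (1 - c ^ 2)

theorem normSq_quintic_polar (ρ t : ℝ) :
    normSq (quintic a b (ρ * exp (t * I))) = quinticPolarNormSq a b ρ (Real.cos (2 * t)) := by
  set z : ℂ := ρ * exp (t * I)
  have hre : z.re = ρ * Real.cos t := by simp [z, exp_ofReal_mul_I_re]
  have him : z.im = ρ * Real.sin t := by simp [z, exp_ofReal_mul_I_im]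
  have hs : normSq z = ρ ^ 2 := by
    rw [normSq_apply, hre, him]
    linear_combination ρ ^ 2 * Real.sin_sq_add_cos_sq t
  have hd : (z ^ 2).re = ρ ^ 2 * Real.cos (2 * t) := by
    rw [sq, mul_re, hre, him, Real.cos_two_mul]
    linear_combination (-ρ ^ 2) * Real.sin_sq_add_cos_sq t
  rw [normSq_quintic, hs, hd, quinticPolarNormSq]
  ring

theorem quinticPolarNormSq_monotoneOn_right (ha : 0 ≤ a) (hb : 0 ≤ b) (hab : a * b + 4 * b ≤ a)
    {ρ : ℝ} (hρ₀ : 0 ≤ ρ) (hρ₁ : ρ ≤ 1) : MonotoneOn (quinticPolarNormSq a b ρ) (Iic 1) := by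
  intro c₁ hc₁ c₂ hc₂ hc
  have hρ2 : ρ ^ 2 ≤ 1 := pow_le_one₀ hρ₀ hρ₁
  have hρ4 : ρ ^ 4 ≤ 1 := pow_le_one₀ hρ₀ hρ₁
  have hc₁₂ : 0 ≤ 2 - c₁ - c₂ := by linarith [mem_Iic.1 hc₁, mem_Iic.1 hc₂]
  have hfactor : 4 * b * ρ ^ 2 * (c₁ + c₂) ≤ 2 * a * (1 - b * ρ ^ 4) := by
    nlinarith [mul_nonneg (mul_nonneg hb (sq_nonneg ρ)) hc₁₂,
      mul_nonneg (mul_nonneg ha hb) (sub_nonneg.2 hρ4), mul_nonneg hb (sub_nonneg.2 hρ2)]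
  have hdiff : quinticPolarNormSq a b ρ c₂ - quinticPolarNormSq a b ρ c₁
      = (c₂ - c₁) * ρ ^ 4 * (2 * a * (1 - b * ρ ^ 4) - 4 * b * ρ ^ 2 * (c₁ + c₂)) := by
    simp only [quinticPolarNormSq]
    ring
  have : 0 ≤ (c₂ - c₁) * ρ ^ 4 * (2 * a * (1 - b * ρ ^ 4) - 4 * b * ρ ^ 2 * (c₁ + c₂)) := by
    have := sub_nonneg.2 hc
    have := sub_nonneg.2 hfactor
    positivity
  linarith

theorem quinticPolarNormSq_strictMonoOn_left (ha : 0 ≤ a) (hb : 0 ≤ b) (hab : 3 * a + 5 * b ≤ 1)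
    {c : ℝ} (hc : c ∈ Icc (-1 : ℝ) 1) : StrictMonoOn (quinticPolarNormSq a b · c) (Icc 0 1) := by
  intro ρ₁ h₁ ρ₂ h₂ hlt
  have hsq {a' : ℝ} (ha' : |a'| ≤ a) :
      (ρ₁ + a' * ρ₁ ^ 3 - b * ρ₁ ^ 5) ^ 2 < (ρ₂ + a' * ρ₂ ^ 3 - b * ρ₂ ^ 5) ^ 2 := by
    have hφ := strictMonoOn_real_quintic ha' hb hab
    have h0 : 0 ≤ ρ₁ + a' * ρ₁ ^ 3 - b * ρ₁ ^ 5 := by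
      simpa using hφ.monotoneOn ⟨le_rfl, zero_le_one⟩ h₁ h₁.1
    exact pow_lt_pow_left₀ (hφ h₁ h₂ hlt) h0 two_ne_zero
  have hp := hsq (a' := a) (abs_of_nonneg ha).le
  have hm := hsq (a' := -a) (by rw [abs_neg, abs_of_nonneg ha])
  have h6 : 4 * b * ρ₁ ^ 6 * (1 - c ^ 2) ≤ 4 * b * ρ₂ ^ 6 * (1 - c ^ 2) := by
    have : 0 ≤ 1 - c ^ 2 := by nlinarith [hc.1, hc.2]
    have := pow_le_pow_left₀ h₁.1 hlt.le 6
    gcongr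
  simp only [quinticPolarNormSq]
  rcases le_total c 0 with hc0 | hc0
  · nlinarith [mul_le_mul_of_nonneg_left hp.le (by linarith [hc.1] : 0 ≤ (1 + c) / 2)]
  · nlinarith [mul_le_mul_of_nonneg_left hm.le (by linarith [hc.2] : 0 ≤ (1 - c) / 2)]

theorem exists_continuousOn_quinticPolarNormSq_eq (ha : 0 ≤ a) (hb : 0 ≤ b)
    (h₁ : 3 * a + 5 * b ≤ 1) (h₂ : a * b + 4 * b ≤ a) {ρ₀ t₀ : ℝ} (hρ₀ : ρ₀ ∈ Icc (0 : ℝ) 1)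
    (ht₀ : t₀ ∈ Icc 0 (π / 2)) :
    ∃ ρ : ℝ → ℝ, ContinuousOn ρ (Icc 0 t₀) ∧ ρ t₀ = ρ₀ ∧ ∀ t ∈ Icc 0 t₀, ρ t ∈ Icc 0 ρ₀ ∧
      quinticPolarNormSq a b (ρ t) (Real.cos (2 * t)) =
        quinticPolarNormSq a b ρ₀ (Real.cos (2 * t₀)) := by
  have hcos (t : ℝ) : Real.cos (2 * t) ∈ Icc (-1 : ℝ) 1 :=
    ⟨Real.neg_one_le_cos _, Real.cos_le_one _⟩
  have hmono (t : ℝ) : StrictMonoOn (quinticPolarNormSq a b · (Real.cos (2 * t))) (Icc 0 ρ₀) :=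
    (quinticPolarNormSq_strictMonoOn_left ha hb h₁ (hcos t)).mono (Icc_subset_Icc_right hρ₀.2)
  have hc (t : ℝ) (ht : t ∈ Icc 0 t₀) : quinticPolarNormSq a b ρ₀ (Real.cos (2 * t₀)) ∈
      Icc (quinticPolarNormSq a b 0 (Real.cos (2 * t)))
        (quinticPolarNormSq a b ρ₀ (Real.cos (2 * t))) := by
    refine ⟨?_, quinticPolarNormSq_monotoneOn_right ha hb h₂ hρ₀.1 hρ₀.2 (hcos _).2 (hcos _).2 ?_⟩
    · rw [← normSq_quintic_polar, ← normSq_quintic_polar]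
      simpa [quintic] using normSq_nonneg _
    · exact Real.cos_le_cos_of_nonneg_of_le_pi (by linarith [ht.1]) (by linarith [ht₀.2])
        (by linarith [ht.2])
  obtain ⟨ρ, hρc, hρ⟩ := exists_continuousOn_eq_of_strictMonoOn (s := Icc 0 t₀)
    (F := fun t ρ => quinticPolarNormSq a b ρ (Real.cos (2 * t))) hρ₀.1
    (fun _ _ => by simp only [quinticPolarNormSq]; fun_prop)
    (fun _ _ => by simp only [quinticPolarNormSq]; fun_prop) (fun t _ => hmono t) hc
  have ht₀mem : t₀ ∈ Icc 0 t₀ := ⟨ht₀.1, le_rfl⟩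
  exact ⟨ρ, hρc, (hmono t₀).injOn (hρ t₀ ht₀mem).1 ⟨hρ₀.1, le_rfl⟩ (hρ t₀ ht₀mem).2, hρ⟩

theorem mul_exp_mem_image_quintic_of_le (ha : 0 ≤ a) (hb : 0 ≤ b) (h₁ : 3 * a + 5 * b ≤ 1)
    (h₂ : a * b + 4 * b ≤ a) {r θ θ' : ℝ} (hr : 0 < r) (hθ' : 0 ≤ θ') (hθ'θ : θ' ≤ θ)
    (hθ : θ ≤ π / 2) (hmem : (r : ℂ) * exp (θ * I) ∈ quintic a b '' ball 0 1) :
    (r : ℂ) * exp (θ' * I) ∈ quintic a b '' ball 0 1 := by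
  obtain ⟨z₀, hz₀, hfz₀⟩ := hmem
  have ht₀ := arg_mem_Icc_of_quintic_eq_mul_exp ha hb h₁ hz₀ hr ⟨hθ'.trans hθ'θ, hθ⟩ hfz₀
  obtain ⟨ρ, hρc, hρt₀, hρ⟩ := exists_continuousOn_quinticPolarNormSq_eq ha hb h₁ h₂
    ⟨norm_nonneg z₀, (mem_ball_zero_iff.1 hz₀).le⟩ ht₀
  set z : ℝ → ℂ := fun t => ρ t * exp (t * I)
  have hz (t : ℝ) (ht : t ∈ Icc 0 (arg z₀)) : z t ∈ ball (0 : ℂ) 1 := by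
    rw [mem_ball_zero_iff, norm_mul, norm_exp_ofReal_mul_I, mul_one, norm_real,
      Real.norm_of_nonneg (hρ t ht).1.1]
    exact (hρ t ht).1.2.trans_lt (mem_ball_zero_iff.1 hz₀)
  have hnorm (t : ℝ) (ht : t ∈ Icc 0 (arg z₀)) : ‖quintic a b (z t)‖ = r := by
    rw [← sq_eq_sq₀ (norm_nonneg _) hr.le, Complex.sq_norm, normSq_quintic_polar, (hρ t ht).2,
      ← normSq_quintic_polar, norm_mul_exp_arg_mul_I, hfz₀, ← Complex.sq_norm, norm_mul,
      norm_exp_ofReal_mul_I, mul_one, norm_real, Real.norm_of_nonneg hr.le]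
  have hre_nonneg (t : ℝ) (ht : t ∈ Icc 0 (arg z₀)) : 0 ≤ (quintic a b (z t)).re := by
    refine (quintic_re_nonneg_iff ha hb h₁ (hz t ht)).2 ?_
    rw [re_ofReal_mul, exp_ofReal_mul_I_re]
    exact mul_nonneg (hρ t ht).1.1
      (Real.cos_nonneg_of_mem_Icc ⟨by linarith [pi_pos, ht.1], ht.2.trans ht₀.2⟩)
  have hslit (t : ℝ) (ht : t ∈ Icc 0 (arg z₀)) : quintic a b (z t) ∈ slitPlane :=
    mem_slitPlane_of_re_nonneg (hre_nonneg t ht) (norm_pos_iff.1 (hnorm t ht ▸ hr))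
  have harg₀ : arg (quintic a b (z 0)) = 0 := by
    refine arg_eq_zero_iff.2 ⟨hre_nonneg 0 ⟨le_rfl, ht₀.1⟩, ?_⟩
    rw [quintic_im, im_ofReal_mul, exp_ofReal_mul_I_im]
    simp
  have hargt₀ : arg (quintic a b (z (arg z₀))) = θ := by
    simp only [z, hρt₀, norm_mul_exp_arg_mul_I, hfz₀]
    rw [arg_real_mul _ hr, exp_mul_I]
    exact arg_cos_add_sin_mul_I (θ := θ) ⟨by linarith [pi_pos], by linarith [pi_pos]⟩
  obtain ⟨t, ht, hzt⟩ := ContinuousOn.exists_eq_mul_exp_of_norm_eq ht₀.1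
    (by simp only [z, quintic]; fun_prop) hnorm hslit (by rw [harg₀, hargt₀]; exact ⟨hθ', hθ'θ⟩)
  exact ⟨z t, hz t ht, hzt⟩

end Quintic

/-- Proposition 4.4: for positive constants `a, b` with `3a + 5b ≤ 1` and
`ab + 4b ≤ a`, the map `f(z) = z + a z³ − b z⁵` is a conformal mapping of the unit
disk onto a bi-circularly symmetric domain. -/
theorem quintic_bicircsym (a b : ℝ) (ha : 0 < a) (hb : 0 < b)
    (h1 : 3 * a + 5 * b ≤ 1) (h2 : a * b + 4 * b ≤ a)
    (f : ℂ → ℂ) (hf : ∀ z : ℂ, f z = z + (a : ℂ) * z ^ 3 - (b : ℂ) * z ^ 5) :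
    InjOn f (ball (0 : ℂ) 1) ∧
    IsOpen (f '' ball (0 : ℂ) 1) ∧ IsConnected (f '' ball (0 : ℂ) 1) ∧
    BiCircularlySymmetric (f '' ball (0 : ℂ) 1) := by
  obtain rfl : f = quintic a b := funext hf
  have hinj := quintic_injOn ha.le hb.le h1
  have han : AnalyticOnNhd ℂ (quintic a b) (ball 0 1) :=
    DifferentiableOn.analyticOnNhd (by unfold quintic; fun_prop) isOpen_ball
  refine ⟨hinj, han.isOpen_image_of_injOn (convex_ball 0 1).isPreconnected isOpen_ball hinj,
    (isConnected_ball one_pos).image _ han.continuousOn, ?_, ?_, ?_⟩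
  · rintro _ ⟨z, hz, rfl⟩
    exact ⟨-z, by simpa using hz, quintic_neg z⟩
  · rintro _ ⟨z, hz, rfl⟩
    exact ⟨starRingEnd ℂ z, by simpa using hz, quintic_conj z⟩
  · intro r θ θ' hr hθ' hθ'θ hθ
    exact mul_exp_mem_image_quintic_of_le ha.le hb.le h1 h2 hr hθ' hθ'θ hθ
end

section
/- Let B be a 2×2 complex matrix and let x ∈ ℂ² be a unit vector on which B attains its operator norm, i.e. ‖x‖ = 1 and ‖Bx‖ = ‖B‖. If ⟨Bx, x⟩ = 0, then the trace of B is 0. -/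
/-!
If `T` attains its norm at `x`, then `T†T x = ‖T‖² x`, hence
`⟪T x, T (T x)⟫ = ‖T‖² ⟪x, T x⟫ = 0`. When `T x ≠ 0`, the vectors `x` and `T x / ‖T x‖` form an
orthonormal basis of the plane in which both diagonal entries of `T` vanish; when `T x = 0`,
`T = 0`.
-/

open scoped InnerProductSpace InnerProduct

namespace ContinuousLinearMap

variable {𝕜 E F : Type*} [RCLike 𝕜] [NormedAddCommGroup E] [InnerProductSpace 𝕜 E]
  [NormedAddCommGroup F] [InnerProductSpace 𝕜 F] [CompleteSpace E] [CompleteSpace F]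

theorem adjoint_comp_self_apply_of_norm_apply_eq (T : E →L[𝕜] F) {x : E}
    (h : ‖T x‖ = ‖T‖ * ‖x‖) : (T† ∘L T) x = ((‖T‖ ^ 2 : ℝ) : 𝕜) • x := by
  have hnorm : ‖(T† ∘L T) x‖ ^ 2 ≤ (‖T‖ ^ 2 * ‖x‖) ^ 2 := by
    gcongr
    calc ‖(T† ∘L T) x‖ ≤ ‖T†‖ * ‖T x‖ := T†.le_opNorm _
      _ = ‖T‖ ^ 2 * ‖x‖ := by rw [adjoint.norm_map, h]; ring
  have hinner : RCLike.re ⟪(T† ∘L T) x, x⟫_𝕜 = ‖T‖ ^ 2 * ‖x‖ ^ 2 := by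
    rw [← apply_norm_sq_eq_inner_adjoint_left, h]; ring
  have hdist : ‖(T† ∘L T) x - ((‖T‖ ^ 2 : ℝ) : 𝕜) • x‖ ^ 2 ≤ 0 := by
    rw [norm_sub_sq (𝕜 := 𝕜), inner_smul_right, RCLike.re_ofReal_mul, hinner, norm_smul,
      RCLike.norm_ofReal, abs_of_nonneg (by positivity)]
    linarith
  rw [← sub_eq_zero, ← norm_eq_zero]
  exact pow_eq_zero_iff two_ne_zero |>.mp (le_antisymm hdist (sq_nonneg _))

theorem inner_apply_apply_self_eq_zero (T : E →L[𝕜] E) {x : E} (h : ‖T x‖ = ‖T‖ * ‖x‖)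
    (horth : ⟪x, T x⟫_𝕜 = 0) : ⟪T x, T (T x)⟫_𝕜 = 0 := by
  rw [← adjoint_inner_left, ← comp_apply, adjoint_comp_self_apply_of_norm_apply_eq T h,
    inner_smul_left, horth, mul_zero]

end ContinuousLinearMap

namespace LinearMap

variable {𝕜 E ι : Type*} [RCLike 𝕜] [NormedAddCommGroup E] [InnerProductSpace 𝕜 E]
  [Fintype ι] [Nonempty ι]

theorem trace_eq_sum_inner_of_orthonormal {v : ι → E} (hv : Orthonormal 𝕜 v)
    (hcard : Fintype.card ι = Module.finrank 𝕜 E) (T : E →ₗ[𝕜] E) :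
    T.trace 𝕜 E = ∑ i, ⟪v i, T (v i)⟫_𝕜 := by
  let b := basisOfOrthonormalOfCardEqFinrank hv hcard
  have hb : ⇑b = v := coe_basisOfOrthonormalOfCardEqFinrank hv hcard
  rw [trace_eq_sum_inner T (b.toOrthonormalBasis (hb ▸ hv)), Module.Basis.coe_toOrthonormalBasis,
    hb]

end LinearMap

theorem ContinuousLinearMap.trace_eq_zero_of_norm_apply_eq_of_inner_apply_eq_zero
    {𝕜 E : Type*} [RCLike 𝕜] [NormedAddCommGroup E] [InnerProductSpace 𝕜 E]
    [FiniteDimensional 𝕜 E] (hE : Module.finrank 𝕜 E = 2) (T : E →L[𝕜] E) {x : E} (hx : ‖x‖ = 1)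
    (h : ‖T x‖ = ‖T‖) (horth : ⟪x, T x⟫_𝕜 = 0) : (T : E →ₗ[𝕜] E).trace 𝕜 E = 0 := by
  have := FiniteDimensional.complete 𝕜 E
  by_cases hTx : T x = 0
  · have hT : T = 0 := by rwa [hTx, norm_zero, eq_comm, norm_eq_zero] at h
    simp [hT]
  · set y := ((‖T x‖⁻¹ : ℝ) : 𝕜) • T x
    have hon : Orthonormal 𝕜 ![x, y] := by
      simp [y, hx, norm_smul, inner_smul_right, horth, hTx]
    rw [LinearMap.trace_eq_sum_inner_of_orthonormal hon (by simp [hE]), Fin.sum_univ_two]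
    simp [y, inner_smul_left, inner_smul_right, horth,
      T.inner_apply_apply_self_eq_zero (by rw [hx, mul_one, h]) horth]

theorem Matrix.trace_toEuclideanCLM {𝕜 n : Type*} [RCLike 𝕜] [Fintype n] [DecidableEq n]
    (A : Matrix n n 𝕜) :
    (toEuclideanCLM (𝕜 := 𝕜) A : EuclideanSpace 𝕜 n →ₗ[𝕜] EuclideanSpace 𝕜 n).trace 𝕜 _ =
      A.trace := by
  rw [coe_toEuclideanCLM_eq_toEuclideanLin]
  exact trace_toLin_eq A (PiLp.basisFun 2 𝕜 n)

/-- If a `2×2` complex matrix `B` attains its (Euclidean) operator norm at a unit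
vector `x` and `⟨Bx, x⟩ = 0`, then `tr B = 0`. (In Mathlib's convention the inner
product is conjugate-linear in the first slot, so `⟨Bx, x⟩ = ⟪x, Bx⟫`.) -/
theorem trace_zero_of_norm_attained_orthogonal (B : Matrix (Fin 2) (Fin 2) ℂ)
    (x : EuclideanSpace ℂ (Fin 2)) (hx : ‖x‖ = 1)
    (hattain : ‖Matrix.toEuclideanCLM (𝕜 := ℂ) B x‖ = ‖Matrix.toEuclideanCLM (𝕜 := ℂ) B‖)
    (horth : inner (𝕜 := ℂ) x (Matrix.toEuclideanCLM (𝕜 := ℂ) B x) = (0 : ℂ)) :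
    Matrix.trace B = 0 := by
  rw [← Matrix.trace_toEuclideanCLM]
  exact (Matrix.toEuclideanCLM (𝕜 := ℂ) B).trace_eq_zero_of_norm_apply_eq_of_inner_apply_eq_zero
    finrank_euclideanSpace_fin hx hattain horth
end
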